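/- arXiv:2408.12434 — 9 statements merged into one kernel-verified Lean document; each statement's English description precedes it below -/
import Mathlib

section
/- The quantity K := P + P^{-1} + Q·P^{-1} is conserved along solutions of the ODE system r·dP/dr = -P·Q, r·dQ/dr = Q·(P² - 1 - Q), for P > 0: that is, r·dK/dr = 0. -/
/-!
Differentiating, `K' = P' (1 - (1 + Q) / P²) + Q' / P`. Multiplying by `r` and substituting the
equations, the `P'`-term becomes `-P Q + Q (1 + Q) / P` and the `Q'`-term `P Q - Q (1 + Q) / P`.
-/

theorem HasDerivAt.add_inv_add_mul_inv {𝕜 : Type*} [NontriviallyNormedField 𝕜] {P Q : 𝕜 → 𝕜}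
    {p q x : 𝕜} (hP : HasDerivAt P p x) (hQ : HasDerivAt Q q x) (hx : P x ≠ 0) :
    HasDerivAt (fun s => P s + (P s)⁻¹ + Q s * (P s)⁻¹)
      (p * (1 - (1 + Q x) / P x ^ 2) + q / P x) x := by
  refine ((hP.add (hP.inv hx)).add (hQ.mul (hP.inv hx))).congr_deriv ?_
  simp only [Pi.inv_apply]
  field_simp
  ring

/-- The quantity K := P + P⁻¹ + Q·P⁻¹ is conserved along solutions of
the ODE system r·P' = -P·Q, r·Q' = Q·(P² - 1 - Q), for P > 0: r·K' = 0. -/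
theorem stmt_0 (r₀ : ℝ) (P Q : ℝ → ℝ)
    (hPdiff : ∀ r ∈ Set.Ioc (0:ℝ) r₀, DifferentiableAt ℝ P r)
    (hQdiff : ∀ r ∈ Set.Ioc (0:ℝ) r₀, DifferentiableAt ℝ Q r)
    (hPpos : ∀ r ∈ Set.Ioc (0:ℝ) r₀, 0 < P r)
    (hodeP : ∀ r ∈ Set.Ioc (0:ℝ) r₀, r * deriv P r = -(P r) * Q r)
    (hodeQ : ∀ r ∈ Set.Ioc (0:ℝ) r₀, r * deriv Q r = Q r * ((P r)^2 - 1 - Q r)) :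
    ∀ r ∈ Set.Ioc (0:ℝ) r₀,
      r * deriv (fun s => P s + (P s)⁻¹ + Q s * (P s)⁻¹) r = 0 := by
  intro r hr
  have hP0 : P r ≠ 0 := (hPpos r hr).ne'
  rw [((hPdiff r hr).hasDerivAt.add_inv_add_mul_inv (hQdiff r hr).hasDerivAt hP0).deriv]
  field_simp
  linear_combination (P r ^ 2 - 1 - Q r) * hodeP r hr + P r * hodeQ r hr
end

section
/- If P, Q solve the exact ODE system r·dP/dr = -P·Q, r·dQ/dr = Q·(P²-1-Q) with initial data η^{-1} ≤ P(r₀) ≤ η and 0 ≤ Q(r₀) ≤ 1 for some η ≥ 2, then for all r ∈ (0, r₀], one has (4η)^{-1} ≤ P(r) ≤ 4η and Q(r) ≤ 16η². -/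
/-!
The quantity `(1 + Q + P²) / P` is a first integral of the system. At `r₀` the data bound it
by `3η`, and since it is conserved, the bound `(1 + Q + P²) / P ≤ 3η` with `P > 0`, `Q ≥ 0`
confines `P` to `[(3η)⁻¹, 3η]` and `Q` to `[0, 9η²]` on all of `(0, r₀]`.
-/

open Set

noncomputable def bounceIntegral (P Q : ℝ → ℝ) (r : ℝ) : ℝ := (1 + Q r + P r ^ 2) / P r

theorem hasDerivAt_bounceIntegral {P Q : ℝ → ℝ} {P' Q' x : ℝ}
    (hP : HasDerivAt P P' x) (hQ : HasDerivAt Q Q' x) (hx : x ≠ 0) (hPx : P x ≠ 0)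
    (hodeP : x * P' = -P x * Q x) (hodeQ : x * Q' = Q x * (P x ^ 2 - 1 - Q x)) :
    HasDerivAt (bounceIntegral P Q) 0 x := by
  have hP' : P' = -P x * Q x / x := by rw [← hodeP]; field_simp
  have hQ' : Q' = Q x * (P x ^ 2 - 1 - Q x) / x := by rw [← hodeQ]; field_simp
  refine ((((hasDerivAt_const x 1).add hQ).add (hP.pow 2)).div hP hPx).congr_deriv ?_
  rw [hP', hQ', Pi.add_apply, Pi.add_apply, Pi.pow_apply]
  field_simp
  ring

theorem bounceIntegral_eq_of_mem_Ioc {P Q : ℝ → ℝ} {r₀ : ℝ}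
    (hPdiff : ∀ r ∈ Ioc (0:ℝ) r₀, DifferentiableAt ℝ P r)
    (hQdiff : ∀ r ∈ Ioc (0:ℝ) r₀, DifferentiableAt ℝ Q r)
    (hPpos : ∀ r ∈ Ioc (0:ℝ) r₀, 0 < P r)
    (hodeP : ∀ r ∈ Ioc (0:ℝ) r₀, r * deriv P r = -(P r) * Q r)
    (hodeQ : ∀ r ∈ Ioc (0:ℝ) r₀, r * deriv Q r = Q r * ((P r)^2 - 1 - Q r))
    {r : ℝ} (hr : r ∈ Ioc (0:ℝ) r₀) :
    bounceIntegral P Q r = bounceIntegral P Q r₀ := by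
  have hderiv : ∀ x ∈ Ioc (0:ℝ) r₀, HasDerivAt (bounceIntegral P Q) 0 x := fun x hx =>
    hasDerivAt_bounceIntegral (hPdiff x hx).hasDerivAt (hQdiff x hx).hasDerivAt hx.1.ne'
      (hPpos x hx).ne' (hodeP x hx) (hodeQ x hx)
  have hIcc : Icc r r₀ ⊆ Ioc 0 r₀ := fun x hx => ⟨hr.1.trans_le hx.1, hx.2⟩
  refine (constant_of_has_deriv_right_zero (fun x hx => ?_) (fun x hx => ?_) r₀
    (right_mem_Icc.mpr hr.2)).symm
  · exact (hderiv x (hIcc hx)).continuousAt.continuousWithinAt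
  · exact (hderiv x (hIcc (Ico_subset_Icc_self hx))).hasDerivWithinAt

theorem bounceIntegral_le_of_bounds {η p q : ℝ} (hp : 0 < p) (hpl : η⁻¹ ≤ p) (hpu : p ≤ η)
    (hq : q ≤ 1) : (1 + q + p ^ 2) / p ≤ 3 * η := by
  have hη : 0 < η := hp.trans_le hpu
  have hηp : 1 ≤ η * p := by rwa [inv_le_iff_one_le_mul₀' hη] at hpl
  rw [div_le_iff₀ hp]
  nlinarith

theorem bounds_of_bounceIntegral_le {c p q : ℝ} (hp : 0 < p) (hq : 0 ≤ q)
    (h : (1 + q + p ^ 2) / p ≤ c) : c⁻¹ ≤ p ∧ p ≤ c ∧ q ≤ c ^ 2 := by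
  rw [div_le_iff₀ hp] at h
  have hpc : p ≤ c := le_of_mul_le_mul_right (by nlinarith) hp
  have hc : 0 < c := hp.trans_le hpc
  refine ⟨?_, hpc, by nlinarith⟩
  rw [inv_le_iff_one_le_mul₀ hc]
  nlinarith

theorem stmt_1_general (η r₀ : ℝ) (P Q : ℝ → ℝ)
    (hPdiff : ∀ r ∈ Set.Ioc (0:ℝ) r₀, DifferentiableAt ℝ P r)
    (hQdiff : ∀ r ∈ Set.Ioc (0:ℝ) r₀, DifferentiableAt ℝ Q r)
    (hPpos : ∀ r ∈ Set.Ioc (0:ℝ) r₀, 0 < P r)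
    (hQnn : ∀ r ∈ Set.Ioc (0:ℝ) r₀, 0 ≤ Q r)
    (hodeP : ∀ r ∈ Set.Ioc (0:ℝ) r₀, r * deriv P r = -(P r) * Q r)
    (hodeQ : ∀ r ∈ Set.Ioc (0:ℝ) r₀, r * deriv Q r = Q r * ((P r)^2 - 1 - Q r))
    (hP0l : η⁻¹ ≤ P r₀) (hP0u : P r₀ ≤ η) (hQ0 : Q r₀ ≤ 1) :
    ∀ r ∈ Set.Ioc (0:ℝ) r₀,
      (4*η)⁻¹ ≤ P r ∧ P r ≤ 4*η ∧ Q r ≤ 16*η^2 := by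
  intro r hr
  have hPr₀ : 0 < P r₀ := hPpos r₀ ⟨hr.1.trans_le hr.2, le_rfl⟩
  have hη : 0 < η := hPr₀.trans_le hP0u
  have hconst := bounceIntegral_eq_of_mem_Ioc hPdiff hQdiff hPpos hodeP hodeQ hr
  obtain ⟨hlow, hup, hQ⟩ := bounds_of_bounceIntegral_le (hPpos r hr) (hQnn r hr)
    (hconst.trans_le (bounceIntegral_le_of_bounds hPr₀ hP0l hP0u hQ0))
  refine ⟨le_trans ?_ hlow, by linarith, by nlinarith⟩
  gcongr
  linarith

/-- For the exact bounce ODE system with data η⁻¹ ≤ P(r₀) ≤ η,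
0 ≤ Q(r₀) ≤ 1 (η ≥ 2), one has (4η)⁻¹ ≤ P ≤ 4η and Q ≤ 16η² on (0, r₀]. -/
theorem stmt_1 (η r₀ : ℝ) (hη : 2 ≤ η) (hr₀ : 0 < r₀) (P Q : ℝ → ℝ)
    (hPdiff : ∀ r ∈ Set.Ioc (0:ℝ) r₀, DifferentiableAt ℝ P r)
    (hQdiff : ∀ r ∈ Set.Ioc (0:ℝ) r₀, DifferentiableAt ℝ Q r)
    (hPpos : ∀ r ∈ Set.Ioc (0:ℝ) r₀, 0 < P r)
    (hQnn : ∀ r ∈ Set.Ioc (0:ℝ) r₀, 0 ≤ Q r)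
    (hodeP : ∀ r ∈ Set.Ioc (0:ℝ) r₀, r * deriv P r = -(P r) * Q r)
    (hodeQ : ∀ r ∈ Set.Ioc (0:ℝ) r₀, r * deriv Q r = Q r * ((P r)^2 - 1 - Q r))
    (hP0l : η⁻¹ ≤ P r₀) (hP0u : P r₀ ≤ η) (hQ0 : Q r₀ ≤ 1) :
    ∀ r ∈ Set.Ioc (0:ℝ) r₀,
      (4*η)⁻¹ ≤ P r ∧ P r ≤ 4*η ∧ Q r ≤ 16*η^2 :=
  stmt_1_general η r₀ P Q hPdiff hQdiff hPpos hQnn hodeP hodeQ hP0l hP0u hQ0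
end

section
/- For the perturbed ODE system with bounded error terms, the almost-conserved quantity K = P + P^{-1} + Q·P^{-1} satisfies |r·dK/dr| ≤ (1 + 16η² + 64η³ + 256η⁴)·δ·r^{1/2} whenever (4η)^{-1} ≤ P ≤ 4η and 0 ≤ Q ≤ 16η². -/
/-!
The quantity `K = P + P⁻¹ + Q P⁻¹` is a first integral of the unperturbed system
(`E₁ = E₂ = 0`): along the perturbed flow all terms of `r K'` cancel except
`r K' = E₁ (1 - (1 + Q) / P²) + Q E₂ / P`. With `P⁻¹ ≤ 4η` and `0 ≤ Q ≤ 16η²` the two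
coefficients are at most `1 + 16η² + 256η⁴` and `64η³` in absolute value.
-/

theorem hasDerivAt_add_inv_add_mul_inv {P Q : ℝ → ℝ} {p' q' r : ℝ}
    (hP : HasDerivAt P p' r) (hQ : HasDerivAt Q q' r) (hP0 : P r ≠ 0) :
    HasDerivAt (fun s => P s + (P s)⁻¹ + Q s * (P s)⁻¹)
      (p' * (1 - (1 + Q r) / P r ^ 2) + q' / P r) r :=
  ((hP.add (hP.inv hP0)).add (hQ.mul (hP.inv hP0))).congr_deriv <| by
    simp only [Pi.inv_apply]
    field_simp
    ring

theorem perturbed_flow_residual {p q e₁ e₂ : ℝ} (hp : p ≠ 0) :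
    (-p * q + e₁) * (1 - (1 + q) / p ^ 2) + q * (p ^ 2 - 1 - q + e₂) / p
      = e₁ * (1 - (1 + q) / p ^ 2) + q * e₂ / p := by
  field_simp
  ring

theorem abs_perturbed_flow_residual_le {p q e₁ e₂ a b ε : ℝ} (hp : 0 < p)
    (hpa : p⁻¹ ≤ a) (hq : 0 ≤ q) (hqb : q ≤ b) (he₁ : |e₁| ≤ ε) (he₂ : |e₂| ≤ ε) :
    |e₁ * (1 - (1 + q) / p ^ 2) + q * e₂ / p| ≤ (1 + (1 + b) * a ^ 2 + b * a) * ε := by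
  have hp_inv : 0 ≤ p⁻¹ := inv_nonneg.2 hp.le
  have hε : 0 ≤ ε := (abs_nonneg _).trans he₁
  have hw : (1 + q) / p ^ 2 ≤ (1 + b) * a ^ 2 := by
    rw [div_eq_mul_inv, ← inv_pow]
    gcongr
    linarith
  have hcoeff : |1 - (1 + q) / p ^ 2| ≤ 1 + (1 + b) * a ^ 2 := by
    have : 0 ≤ (1 + q) / p ^ 2 := by positivity
    rw [abs_le]
    constructor <;> linarith
  have hsecond : |q * e₂ / p| ≤ b * a * ε := by
    rw [div_eq_mul_inv, abs_mul, abs_mul, abs_of_nonneg hq, abs_of_nonneg hp_inv,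
      mul_right_comm]
    have hb : 0 ≤ b := hq.trans hqb
    have ha : 0 ≤ a := hp_inv.trans hpa
    gcongr
  calc |e₁ * (1 - (1 + q) / p ^ 2) + q * e₂ / p|
      ≤ |e₁| * |1 - (1 + q) / p ^ 2| + |q * e₂ / p| := by
        rw [← abs_mul]; exact abs_add_le _ _
    _ ≤ ε * (1 + (1 + b) * a ^ 2) + b * a * ε := by gcongr
    _ = (1 + (1 + b) * a ^ 2 + b * a) * ε := by ring

theorem stmt_3_general (η δ r_b r₀ : ℝ) (hη : 2 < η)
    (P Q E₁ E₂ : ℝ → ℝ)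
    (hPdiff : ∀ r ∈ Set.Icc r_b r₀, DifferentiableAt ℝ P r)
    (hQdiff : ∀ r ∈ Set.Icc r_b r₀, DifferentiableAt ℝ Q r)
    (hodeP : ∀ r ∈ Set.Icc r_b r₀, r * deriv P r = -(P r) * Q r + E₁ r)
    (hodeQ : ∀ r ∈ Set.Icc r_b r₀, r * deriv Q r = Q r * ((P r)^2 - 1 - Q r + E₂ r))
    (hE₁ : ∀ r ∈ Set.Icc r_b r₀, |E₁ r| ≤ δ * Real.sqrt r)
    (hE₂ : ∀ r ∈ Set.Icc r_b r₀, |E₂ r| ≤ δ * Real.sqrt r)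
    (hPl : ∀ r ∈ Set.Icc r_b r₀, (4*η)⁻¹ ≤ P r)
    (hQl : ∀ r ∈ Set.Icc r_b r₀, 0 ≤ Q r)
    (hQu : ∀ r ∈ Set.Icc r_b r₀, Q r ≤ 16*η^2) :
    ∀ r ∈ Set.Icc r_b r₀,
      |r * deriv (fun s => P s + (P s)⁻¹ + Q s * (P s)⁻¹) r|
        ≤ (1 + 16*η^2 + 64*η^3 + 256*η^4) * δ * Real.sqrt r := by
  intro r hr
  have hP_pos : 0 < P r := lt_of_lt_of_le (by positivity) (hPl r hr)
  have hP_inv : (P r)⁻¹ ≤ 4 * η := by simpa using inv_anti₀ (by positivity) (hPl r hr)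
  have hK := hasDerivAt_add_inv_add_mul_inv (hPdiff r hr).hasDerivAt (hQdiff r hr).hasDerivAt
    hP_pos.ne'
  have hrK : r * deriv (fun s => P s + (P s)⁻¹ + Q s * (P s)⁻¹) r
      = E₁ r * (1 - (1 + Q r) / P r ^ 2) + Q r * E₂ r / P r := by
    rw [hK.deriv, mul_add, ← mul_assoc, hodeP r hr, ← mul_div_assoc, hodeQ r hr]
    exact perturbed_flow_residual hP_pos.ne'
  rw [hrK]
  calc _ ≤ (1 + (1 + 16 * η ^ 2) * (4 * η) ^ 2 + 16 * η ^ 2 * (4 * η)) * (δ * Real.sqrt r) :=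
        abs_perturbed_flow_residual_le hP_pos hP_inv (hQl r hr) (hQu r hr) (hE₁ r hr) (hE₂ r hr)
    _ = (1 + 16*η^2 + 64*η^3 + 256*η^4) * δ * Real.sqrt r := by ring

/-- For the perturbed bounce ODE system, the almost-conserved quantity
K = P + P⁻¹ + Q·P⁻¹ satisfies |r·K'| ≤ (1 + 16η² + 64η³ + 256η⁴)·δ·√r whenever
(4η)⁻¹ ≤ P ≤ 4η and 0 ≤ Q ≤ 16η². -/
theorem stmt_3 (η δ r_b r₀ : ℝ) (hη : 2 < η) (hδ : 0 ≤ δ)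
    (P Q E₁ E₂ : ℝ → ℝ)
    (hPdiff : ∀ r ∈ Set.Icc r_b r₀, DifferentiableAt ℝ P r)
    (hQdiff : ∀ r ∈ Set.Icc r_b r₀, DifferentiableAt ℝ Q r)
    (hodeP : ∀ r ∈ Set.Icc r_b r₀, r * deriv P r = -(P r) * Q r + E₁ r)
    (hodeQ : ∀ r ∈ Set.Icc r_b r₀, r * deriv Q r = Q r * ((P r)^2 - 1 - Q r + E₂ r))
    (hE₁ : ∀ r ∈ Set.Icc r_b r₀, |E₁ r| ≤ δ * Real.sqrt r)
    (hE₂ : ∀ r ∈ Set.Icc r_b r₀, |E₂ r| ≤ δ * Real.sqrt r)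
    (hPl : ∀ r ∈ Set.Icc r_b r₀, (4*η)⁻¹ ≤ P r)
    (hPu : ∀ r ∈ Set.Icc r_b r₀, P r ≤ 4*η)
    (hQl : ∀ r ∈ Set.Icc r_b r₀, 0 ≤ Q r)
    (hQu : ∀ r ∈ Set.Icc r_b r₀, Q r ≤ 16*η^2) :
    ∀ r ∈ Set.Icc r_b r₀,
      |r * deriv (fun s => P s + (P s)⁻¹ + Q s * (P s)⁻¹) r|
        ≤ (1 + 16*η^2 + 64*η^3 + 256*η^4) * δ * Real.sqrt r :=
  stmt_3_general η δ r_b r₀ hη P Q E₁ E₂ hPdiff hQdiff hodeP hodeQ hE₁ hE₂ hPl hQl hQu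
end

section
/- Suppose P, Q : (0, r₀] → ℝ satisfy the perturbed bounce ODE system with (4η)^{-1} ≤ P ≤ 4η, Q ≥ 0, and suppose Q(r) → 0 and P(r) → P_∞ as r → 0 with the integral of Q with respect to dr/r over (0, r₀] finite. If Q is not identically zero then P_∞ ≥ 1. Indeed, since r·(d/dr)log Q(r) = P(r)² - 1 - Q(r) - E_Q(r) converges to P_∞² - 1 as r → 0, boundedness of Q as r → 0 forces P_∞² ≥ 1. -/
/-!
Near `r = 0` the equation reads `r · (log Q)' = P² - 1 - Q - E_Q → P_∞² - 1`. If `P_∞ < 1` this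
limit is negative (`P_∞ ≥ 0` because `P > 0`), so `Q` grows as `r ↓ 0`, which is incompatible
with `Q > 0` and `Q → 0`.
-/

open Filter Set Topology

lemma eventually_le_of_tendsto_nhdsGT_of_deriv_nonpos {f : ℝ → ℝ} {a L : ℝ}
    (hdiff : ∀ᶠ x in 𝓝[>] a, DifferentiableAt ℝ f x)
    (hderiv : ∀ᶠ x in 𝓝[>] a, deriv f x ≤ 0)
    (hf : Tendsto f (𝓝[>] a) (𝓝 L)) : ∀ᶠ x in 𝓝[>] a, f x ≤ L := by
  obtain ⟨b, hab, hsub⟩ := mem_nhdsGT_iff_exists_Ioo_subset.mp (hdiff.and hderiv)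
  have hanti : AntitoneOn f (Ioo a b) := by
    refine antitoneOn_of_deriv_nonpos (convex_Ioo a b) ?_ ?_ ?_
    · exact fun x hx => (hsub hx).1.continuousAt.continuousWithinAt
    · exact fun x hx => (hsub (interior_subset hx)).1.differentiableWithinAt
    · exact fun x hx => (hsub (interior_subset hx)).2
  filter_upwards [Ioo_mem_nhdsGT hab] with x hx
  refine ge_of_tendsto hf ?_
  filter_upwards [Ioo_mem_nhdsGT hx.1] with y hy
  exact hanti ⟨hy.1, hy.2.trans hx.2⟩ hx hy.2.le

theorem stmt_5_general (η r₀ Pinf : ℝ) (hη : 2 ≤ η) (hr₀ : 0 < r₀)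
    (P Q EQ : ℝ → ℝ)
    (hQdiff : ∀ r ∈ Set.Ioc (0:ℝ) r₀, DifferentiableAt ℝ Q r)
    (hQpos : ∀ r ∈ Set.Ioc (0:ℝ) r₀, 0 < Q r)
    (hEQ : ∀ r ∈ Set.Ioc (0:ℝ) r₀, |EQ r| ≤ Real.sqrt r)
    (hodeQ : ∀ r ∈ Set.Ioc (0:ℝ) r₀,
      r * deriv Q r = Q r * ((P r)^2 - 1 - Q r - EQ r))
    (hPl : ∀ r ∈ Set.Ioc (0:ℝ) r₀, (4*η)⁻¹ ≤ P r)
    (hPlim : Filter.Tendsto P (nhdsWithin 0 (Set.Ioc 0 r₀)) (nhds Pinf))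
    (hQlim : Filter.Tendsto Q (nhdsWithin 0 (Set.Ioc 0 r₀)) (nhds 0)) :
    1 ≤ Pinf := by
  rw [nhdsWithin_Ioc_eq_nhdsGT hr₀] at hPlim hQlim
  have hIoc : ∀ᶠ r in 𝓝[>] (0:ℝ), r ∈ Ioc 0 r₀ := Ioc_mem_nhdsGT hr₀
  have hPinf : 0 ≤ Pinf :=
    ge_of_tendsto hPlim <| hIoc.mono fun r hr => (inv_pos.2 (by linarith)).le.trans (hPl r hr)
  by_contra! hP1
  have hrate : Tendsto (fun r => P r ^ 2 - 1 + √r) (𝓝[>] 0) (𝓝 (Pinf ^ 2 - 1)) := by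
    simpa using ((hPlim.pow 2).sub_const 1).add
      ((Real.continuous_sqrt.tendsto 0).mono_left nhdsWithin_le_nhds)
  have hrate_neg : ∀ᶠ r in 𝓝[>] (0:ℝ), P r ^ 2 - 1 + √r < 0 :=
    hrate.eventually (gt_mem_nhds (by nlinarith))
  have hderiv : ∀ᶠ r in 𝓝[>] (0:ℝ), deriv Q r ≤ 0 := by
    filter_upwards [hIoc, hrate_neg] with r hr hr_neg
    have hlog_deriv : P r ^ 2 - 1 - Q r - EQ r < 0 := by
      linarith [neg_abs_le (EQ r), hEQ r hr, hQpos r hr]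
    have hmul : r * deriv Q r < 0 := hodeQ r hr ▸ mul_neg_of_pos_of_neg (hQpos r hr) hlog_deriv
    exact (neg_of_mul_neg_right hmul hr.1.le).le
  have hQnonpos : ∀ᶠ r in 𝓝[>] (0:ℝ), Q r ≤ 0 :=
    eventually_le_of_tendsto_nhdsGT_of_deriv_nonpos (hIoc.mono hQdiff) hderiv hQlim
  obtain ⟨r, hr, hQr⟩ := (hIoc.and hQnonpos).exists
  exact (hQpos r hr).not_ge hQr

/-- If Q > 0 solves r·Q' = Q·(P² - 1 - Q - E_Q) with |E_Q| ≤ √r,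
(4η)⁻¹ ≤ P ≤ 4η, P(r) → P_∞ and Q(r) → 0 as r → 0, and ∫₀^{r₀} Q(r)/r dr < ∞,
then P_∞ ≥ 1. -/
theorem stmt_5 (η r₀ Pinf : ℝ) (hη : 2 ≤ η) (hr₀ : 0 < r₀)
    (P Q EQ : ℝ → ℝ)
    (hPdiff : ∀ r ∈ Set.Ioc (0:ℝ) r₀, DifferentiableAt ℝ P r)
    (hQdiff : ∀ r ∈ Set.Ioc (0:ℝ) r₀, DifferentiableAt ℝ Q r)
    (hQpos : ∀ r ∈ Set.Ioc (0:ℝ) r₀, 0 < Q r)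
    (hEQ : ∀ r ∈ Set.Ioc (0:ℝ) r₀, |EQ r| ≤ Real.sqrt r)
    (hodeQ : ∀ r ∈ Set.Ioc (0:ℝ) r₀,
      r * deriv Q r = Q r * ((P r)^2 - 1 - Q r - EQ r))
    (hPl : ∀ r ∈ Set.Ioc (0:ℝ) r₀, (4*η)⁻¹ ≤ P r)
    (hPu : ∀ r ∈ Set.Ioc (0:ℝ) r₀, P r ≤ 4*η)
    (hPlim : Filter.Tendsto P (nhdsWithin 0 (Set.Ioc 0 r₀)) (nhds Pinf))
    (hQlim : Filter.Tendsto Q (nhdsWithin 0 (Set.Ioc 0 r₀)) (nhds 0))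
    (hint : MeasureTheory.IntegrableOn (fun r => Q r / r) (Set.Ioc 0 r₀)) :
    1 ≤ Pinf :=
  stmt_5_general η r₀ Pinf hη hr₀ P Q EQ hQdiff hQpos hEQ hodeQ hPl hPlim hQlim
end

section
/- Sobolev interpolation on the circle: for integers 0 ≤ N < K and f : S¹ → ℝ with ∂ₓ^K f ∈ L²(S¹), one has ‖∂ₓ^N f‖_{L^∞(S¹)} ≲_{N,K} ‖f‖_{L^∞(S¹)}^{1-α} · ‖∂ₓ^K f‖_{L²(S¹)}^α, where α = N/(K - 1/2). -/
/-!
Write `M j = ‖f⁽ʲ⁾‖_∞` and `B = ‖f⁽ᴷ⁾‖_{L²}`. Taylor's formula on a window of length `δ` gives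
`M (j + 1) ≤ 2 M j / δ + δ M (j + 2)`, and, bounding the remainder by Cauchy–Schwarz instead,
`M (K - 1) ≤ 2 M (K - 2) / δ + √δ B`; for windows longer than the period the latter follows from
`f⁽ᴷ⁻¹⁾` vanishing somewhere. Optimising in `δ`, the sequence `log M j` is midpoint convex up to a
bounded defect, with the endpoint `log M (K - 1)` controlled by `log B` with weight `2/3`. A
discrete maximum principle then bounds `log M N` by the affine interpolation between `log M 0`
and `log B` placed at the virtual index `K - 1/2`, which is the exponent `α = N / (K - 1/2)`.
-/

open Real Set Filter Topology intervalIntegral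

section Periodic

variable {g g' g'' : ℝ → ℝ} {T : ℝ}

theorem Function.Periodic.deriv (hg : Function.Periodic g T) :
    Function.Periodic (_root_.deriv g) T := fun x => by
  rw [← deriv_comp_add_const, show (fun y => g (y + T)) = g from funext hg]

theorem Function.Periodic.iteratedDeriv (hg : Function.Periodic g T) (n : ℕ) :
    Function.Periodic (_root_.iteratedDeriv n g) T := by
  induction n with
  | zero => simpa
  | succ n ih => rw [iteratedDeriv_succ]; exact ih.deriv

theorem Function.Periodic.of_hasDerivAt (hg : Function.Periodic g T)
    (h : ∀ x, HasDerivAt g (g' x) x) : Function.Periodic g' T := by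
  obtain rfl : g' = _root_.deriv g := funext fun x => (h x).deriv.symm
  exact hg.deriv

theorem Function.Periodic.bddAbove_range_abs (hg : Function.Periodic g T) (hT : T ≠ 0)
    (hc : Continuous g) : BddAbove (range fun x => |g x|) :=
  ((hg.comp abs).isBounded_of_continuous hT hc.abs).bddAbove

theorem Function.Periodic.integral_le_integral_period (hg : Function.Periodic g T)
    (hc : Continuous g) (hnn : ∀ t, 0 ≤ g t) {x y : ℝ} (hxy : x ≤ y) (hyT : y ≤ x + T) :
    ∫ t in x..y, g t ≤ ∫ t in 0..T, g t :=
  calc ∫ t in x..y, g t ≤ ∫ t in x..x + T, g t :=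
        integral_mono_interval le_rfl hxy hyT (MeasureTheory.ae_of_all _ hnn)
          (hc.intervalIntegrable _ _)
    _ = ∫ t in 0..T, g t := by simpa using hg.intervalIntegral_add_eq x 0

theorem Function.Periodic.exists_hasDerivAt_eq_zero (hg : Function.Periodic g T) (hT : 0 < T)
    (h : ∀ x, HasDerivAt g (g' x) x) : ∃ x, g' x = 0 := by
  obtain ⟨x, -, hx⟩ := _root_.exists_hasDerivAt_eq_zero hT
    (fun x _ => (h x).continuousAt.continuousWithinAt) (by simpa using (hg 0).symm)
    (fun x _ => h x)
  exact ⟨x, hx⟩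

theorem Function.Periodic.abs_deriv_le_integral (hg : Function.Periodic g T) (hT : 0 < T)
    (h1 : ∀ x, HasDerivAt g (g' x) x) (h2 : ∀ x, HasDerivAt g' (g'' x) x)
    (hc : Continuous g'') (x : ℝ) : |g' x| ≤ ∫ t in 0..T, |g'' t| := by
  obtain ⟨x₀, hx₀⟩ := hg.exists_hasDerivAt_eq_zero hT h1
  have hg' := hg.of_hasDerivAt h1
  obtain ⟨y, hy, hxy⟩ := hg'.exists_mem_Ico hT x x₀
  have hftc : g' y = ∫ t in x₀..y, g'' t := by
    rw [integral_eq_sub_of_hasDerivAt (fun t _ => h2 t) (hc.intervalIntegrable _ _), hx₀,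
      sub_zero]
  calc |g' x| = |∫ t in x₀..y, g'' t| := by rw [hxy, hftc]
    _ ≤ ∫ t in x₀..y, |g'' t| := abs_integral_le_integral_abs hy.1
    _ ≤ ∫ t in 0..T, |g'' t| :=
      ((hg'.of_hasDerivAt h2).comp abs).integral_le_integral_period hc.abs
        (fun _ => abs_nonneg _) hy.1 hy.2.le

end Periodic

theorem integral_abs_le_sqrt_mul_integral_sq {u : ℝ → ℝ} (hu : Continuous u) {a b : ℝ}
    (hab : a ≤ b) : ∫ t in a..b, |u t| ≤ √((b - a) * ∫ t in a..b, u t ^ 2) := by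
  rcases hab.eq_or_lt with rfl | hlt
  · simp
  apply le_sqrt_of_sq_le
  set L := b - a
  set J := ∫ t in a..b, |u t|
  set I := ∫ t in a..b, u t ^ 2
  have hL : 0 < L := sub_pos.2 hlt
  have hexpand : ∫ t in a..b, (L * |u t| - J) ^ 2 = L * (L * I - J ^ 2) := by
    have hsq : ∀ t, (L * |u t| - J) ^ 2 = L ^ 2 * u t ^ 2 - 2 * L * J * |u t| + J ^ 2 :=
      fun t => by rw [← sq_abs (u t)]; ring
    simp_rw [hsq]
    rw [integral_add, integral_sub, integral_const_mul, integral_const_mul, integral_const,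
      smul_eq_mul]
    · ring
    all_goals exact Continuous.intervalIntegrable (by fun_prop) _ _
  have hnn : 0 ≤ ∫ t in a..b, (L * |u t| - J) ^ 2 :=
    integral_nonneg hab fun _ _ => sq_nonneg _
  rw [hexpand, mul_nonneg_iff_of_pos_left hL] at hnn
  linarith

section Landau

variable {g g' g'' : ℝ → ℝ}

theorem taylor_remainder_eq_integral (h1 : ∀ x, HasDerivAt g (g' x) x)
    (h2 : ∀ x, HasDerivAt g' (g'' x) x) (hc : Continuous g'') (x δ : ℝ) :
    g (x + δ) - g x - δ * g' x = ∫ t in x..x + δ, (x + δ - t) * g'' t := by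
  have hderiv : ∀ t ∈ uIcc x (x + δ),
      HasDerivAt (fun t => g t + (x + δ - t) * g' t) ((x + δ - t) * g'' t) t := fun t _ => by
    refine ((h1 t).add (((hasDerivAt_id' t).const_sub (x + δ)).mul (h2 t))).congr_deriv ?_
    ring
  rw [integral_eq_sub_of_hasDerivAt hderiv ((by fun_prop : Continuous _).intervalIntegrable _ _)]
  ring

theorem mul_abs_deriv_le (h1 : ∀ x, HasDerivAt g (g' x) x) (h2 : ∀ x, HasDerivAt g' (g'' x) x)
    (hc : Continuous g'') {Mg : ℝ} (hg : ∀ x, |g x| ≤ Mg) {δ : ℝ} (hδ : 0 ≤ δ) (x : ℝ) :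
    δ * |g' x| ≤ 2 * Mg + δ * ∫ t in x..x + δ, |g'' t| := by
  set R := ∫ t in x..x + δ, (x + δ - t) * g'' t
  have hR : |R| ≤ δ * ∫ t in x..x + δ, |g'' t| :=
    calc |R| ≤ ∫ t in x..x + δ, |(x + δ - t) * g'' t| :=
          abs_integral_le_integral_abs (by linarith)
      _ ≤ ∫ t in x..x + δ, δ * |g'' t| := by
          refine integral_mono_on (by linarith)
            ((by fun_prop : Continuous _).intervalIntegrable _ _)
            ((by fun_prop : Continuous _).intervalIntegrable _ _) fun t ht => ?_
          rw [abs_mul]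
          gcongr
          rw [abs_le]
          constructor <;> linarith [ht.1, ht.2]
      _ = δ * ∫ t in x..x + δ, |g'' t| := integral_const_mul _ _
  have htaylor := taylor_remainder_eq_integral h1 h2 hc x δ
  calc δ * |g' x| = |g (x + δ) - g x - R| := by
        rw [show g (x + δ) - g x - R = δ * g' x by linarith, abs_mul, abs_of_nonneg hδ]
    _ ≤ |g (x + δ)| + |g x| + |R| := by
        linarith [abs_sub (g (x + δ) - g x) R, abs_sub (g (x + δ)) (g x)]
    _ ≤ 2 * Mg + δ * ∫ t in x..x + δ, |g'' t| := by linarith [hg (x + δ), hg x]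

theorem abs_deriv_le_of_abs_le (h1 : ∀ x, HasDerivAt g (g' x) x)
    (h2 : ∀ x, HasDerivAt g' (g'' x) x) (hc : Continuous g'') {Mg M2 : ℝ}
    (hg : ∀ x, |g x| ≤ Mg) (hg'' : ∀ x, |g'' x| ≤ M2) {δ : ℝ} (hδ : 0 < δ) (x : ℝ) :
    |g' x| ≤ 2 * Mg / δ + δ * M2 := by
  have hint : ∫ t in x..x + δ, |g'' t| ≤ δ * M2 := by
    simpa using integral_mono_on (a := x) (b := x + δ) (by linarith) (hc.abs.intervalIntegrable _ _)
      (intervalIntegrable_const (μ := MeasureTheory.volume) (c := M2)) fun t _ => hg'' t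
  have := mul_abs_deriv_le h1 h2 hc hg hδ.le x
  rw [div_add' _ _ _ hδ.ne', le_div_iff₀ hδ]
  nlinarith

theorem Function.Periodic.abs_deriv_le {T : ℝ} (hg : Function.Periodic g T) (hT : 0 < T)
    (h1 : ∀ x, HasDerivAt g (g' x) x) (h2 : ∀ x, HasDerivAt g' (g'' x) x)
    (hc : Continuous g'') {Mg : ℝ} (hMg : ∀ x, |g x| ≤ Mg) {δ : ℝ} (hδ : 0 < δ) (x : ℝ) :
    |g' x| ≤ 2 * Mg / δ + √δ * √(∫ t in 0..T, g'' t ^ 2) := by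
  set I := ∫ t in 0..T, g'' t ^ 2
  have hg'' := (hg.of_hasDerivAt h1).of_hasDerivAt h2
  rcases le_or_gt δ T with hδT | hTδ
  · have hloc : ∫ t in x..x + δ, |g'' t| ≤ √δ * √I :=
      calc ∫ t in x..x + δ, |g'' t| ≤ √((x + δ - x) * ∫ t in x..x + δ, g'' t ^ 2) :=
            integral_abs_le_sqrt_mul_integral_sq hc (by linarith)
        _ ≤ √(δ * I) := by
            rw [add_sub_cancel_left]
            gcongr
            exact (hg''.comp (· ^ 2)).integral_le_integral_period ((continuous_pow 2).comp hc)
              (fun _ => sq_nonneg _) (by linarith) (by linarith)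
        _ = √δ * √I := sqrt_mul hδ.le _
    have := mul_abs_deriv_le h1 h2 hc hMg hδ.le x
    rw [div_add' _ _ _ hδ.ne', le_div_iff₀ hδ]
    nlinarith
  · have hMg0 : 0 ≤ Mg := (abs_nonneg _).trans (hMg 0)
    calc |g' x| ≤ ∫ t in 0..T, |g'' t| := hg.abs_deriv_le_integral hT h1 h2 hc x
      _ ≤ √T * √I := by
          simpa [sqrt_mul hT.le] using integral_abs_le_sqrt_mul_integral_sq hc hT.le
      _ ≤ √δ * √I := by gcongr
      _ ≤ 2 * Mg / δ + √δ * √I := le_add_of_nonneg_left (by positivity)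

end Landau

theorem le_max_of_two_mul_le_add {u : ℕ → ℝ} :
    ∀ {n : ℕ}, (∀ j, j + 2 ≤ n → 2 * u (j + 1) ≤ u j + u (j + 2)) →
      ∀ j ≤ n, u j ≤ max (u 0) (u n)
  | 0, _, j, hj => by
    obtain rfl : j = 0 := by omega
    exact le_max_left _ _
  | n + 1, h, j, hj => by
    have ih := le_max_of_two_mul_le_add (n := n) fun j hj => h j (by omega)
    have hn : u n ≤ max (u 0) (u (n + 1)) := by
      rcases n with _ | n
      · exact le_max_left _ _
      have h2 := h n le_rfl
      rcases le_max_iff.1 (ih n (by omega)) with h3 | h3 <;>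
        linarith [le_max_left (u 0) (u (n + 2)), le_max_right (u 0) (u (n + 2))]
    rcases (show j ≤ n ∨ j = n + 1 by omega) with hj | rfl
    · exact (ih j hj).trans (max_le (le_max_left _ _) hn)
    · exact le_max_right _ _

theorem le_interpolation_of_two_mul_le_add {n : ℕ} {y : ℕ → ℝ} {L b : ℝ} (hL : 0 ≤ L)
    (hmid : ∀ j, j + 2 ≤ n + 1 → 2 * y (j + 1) ≤ 2 * L + y j + y (j + 2))
    (htop : 3 * y (n + 1) ≤ 3 * L + y n + 2 * b) {N : ℕ} (hN : N ≤ n + 1) :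
    y N ≤ (1 - (N : ℝ) / (n + 3 / 2)) * y 0 + (N : ℝ) / (n + 3 / 2) * b
      + 3 / 2 * L * (1 + (n + 1) ^ 2) := by
  -- The slope `s` places `b` at the virtual index `n + 3/2`; the quadratic term absorbs the
  -- defect `L`, so that `u` is midpoint convex.
  obtain ⟨s, hs⟩ : ∃ s : ℝ, s * (n + 3 / 2) = b - y 0 :=
    ⟨_, div_mul_cancel₀ _ (by positivity)⟩
  set u : ℕ → ℝ := fun j => y j - y 0 - j * s + L * j ^ 2 with hu
  have hconv : ∀ j, j + 2 ≤ n + 1 → 2 * u (j + 1) ≤ u j + u (j + 2) := fun j hj => by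
    simp only [hu]; push_cast; linear_combination hmid j hj
  have hmax := le_max_of_two_mul_le_add hconv
  have hu0 : u 0 = 0 := by simp [hu]
  have hutop : 3 * u (n + 1) ≤ u n + 3 * L * (1 + (n + 1) ^ 2) := by
    simp only [hu]; push_cast
    linear_combination htop - 2 * hs + mul_nonneg hL (sq_nonneg (n : ℝ))
  have hun : u (n + 1) ≤ 3 / 2 * L * (1 + (n + 1) ^ 2) := by
    have := hmax n (by omega)
    rw [hu0] at this
    have hD : 0 ≤ L * (1 + (n + 1) ^ 2) := by positivity
    rcases le_max_iff.1 this with h | h <;> linarith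
  have huN : u N ≤ 3 / 2 * L * (1 + (n + 1) ^ 2) :=
    (hmax N hN).trans (max_le (by rw [hu0]; positivity) hun)
  have hNs : (N : ℝ) / (n + 3 / 2) * (b - y 0) = N * s := by rw [← hs]; field_simp
  simp only [hu] at huN
  linear_combination huN - hNs + mul_nonneg hL (sq_nonneg (N : ℝ))

theorem log_le_of_forall_le_two_mul_div_add_rpow_mul {a b c p : ℝ} (ha : 0 < a) (hb : 0 < b)
    (hc : 0 < c) (hp : 0 < p) (h : ∀ δ > 0, a ≤ 2 * b / δ + δ ^ p * c) :
    (1 + p) * log a ≤ (1 + p) * log 3 + p * log b + log c := by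
  set d := (log b - log c) / (1 + p)
  set E := (p * log b + log c) / (1 + p)
  have hp1 : (1 + p) ≠ 0 := by positivity
  have hb' : b / exp d = exp E := by
    rw [div_eq_iff (exp_pos _).ne', ← exp_add,
      show E + d = log b by simp only [E, d]; field_simp; ring, exp_log hb]
  have hc' : exp d ^ p * c = exp E := by
    rw [← exp_mul, show E = d * p + log c by simp only [E, d]; field_simp; ring, exp_add,
      exp_log hc]
  have := log_le_log ha ((h _ (exp_pos d)).trans_eq
    (show _ = 3 * exp E by rw [mul_div_assoc, hb', hc']; ring))
  rw [log_mul (by norm_num) (exp_pos _).ne', log_exp] at this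
  have : (1 + p) * E = p * log b + log c := mul_div_cancel₀ _ hp1
  nlinarith

theorem le_mul_rpow_mul_rpow_of_pos {n : ℕ} {M : ℕ → ℝ} {B : ℝ} (hM : ∀ j ≤ n + 1, 0 < M j)
    (hB : 0 < B) (hmid : ∀ j, j + 2 ≤ n + 1 → ∀ δ > 0, M (j + 1) ≤ 2 * M j / δ + δ * M (j + 2))
    (htop : ∀ δ > 0, M (n + 1) ≤ 2 * M n / δ + √δ * B) {N : ℕ} (hN : N ≤ n + 1) :
    M N ≤ exp (3 / 2 * log 3 * (1 + (n + 1) ^ 2)) * M 0 ^ (1 - (N : ℝ) / (n + 3 / 2))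
      * B ^ ((N : ℝ) / (n + 3 / 2)) := by
  have hy := le_interpolation_of_two_mul_le_add (y := fun j => log (M j)) (b := log B)
    (log_nonneg (by norm_num : (1 : ℝ) ≤ 3))
    (fun j hj => by
      have := log_le_of_forall_le_two_mul_div_add_rpow_mul (hM (j + 1) (by omega))
        (hM j (by omega)) (hM (j + 2) hj) one_pos fun δ hδ => by
          rw [rpow_one]; exact hmid j hj δ hδ
      linarith)
    (by
      have := log_le_of_forall_le_two_mul_div_add_rpow_mul (hM (n + 1) le_rfl) (hM n (by omega))
        hB (by norm_num : (0 : ℝ) < 1 / 2) fun δ hδ => by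
          rw [← sqrt_eq_rpow]; exact htop δ hδ
      linarith) hN
  calc M N = exp (log (M N)) := (exp_log (hM N hN)).symm
    _ ≤ _ := exp_le_exp.2 hy
    _ = _ := by
      rw [rpow_def_of_pos (hM 0 (by omega)), rpow_def_of_pos hB, ← exp_add, ← exp_add]
      ring_nf

theorem forall_add_le_two_mul_add_div_add_rpow_mul_add {a b c p ε : ℝ} (hp : 0 ≤ p)
    (hε : 0 ≤ ε) (h : ∀ δ > 0, a ≤ 2 * b / δ + δ ^ p * c) :
    ∀ δ > 0, a + ε ≤ 2 * (b + ε) / δ + δ ^ p * (c + ε) := fun δ hδ => by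
  have hone : 1 ≤ 2 / δ + δ ^ p := by
    rcases le_or_gt 1 δ with h1 | h1
    · linarith [one_le_rpow h1 hp, (by positivity : 0 ≤ 2 / δ)]
    · linarith [(le_div_iff₀ hδ).2 (by linarith : 2 * δ ≤ 2), rpow_nonneg hδ.le p]
  have e : 2 * (b + ε) / δ + δ ^ p * (c + ε) = 2 * b / δ + δ ^ p * c + ε * (2 / δ + δ ^ p) := by
    ring
  rw [e]
  nlinarith [h δ hδ]

theorem le_mul_rpow_mul_rpow {n : ℕ} {M : ℕ → ℝ} {B : ℝ} (hM : ∀ j ≤ n + 1, 0 ≤ M j)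
    (hB : 0 ≤ B) (hmid : ∀ j, j + 2 ≤ n + 1 → ∀ δ > 0, M (j + 1) ≤ 2 * M j / δ + δ * M (j + 2))
    (htop : ∀ δ > 0, M (n + 1) ≤ 2 * M n / δ + √δ * B) {N : ℕ} (hN : N ≤ n + 1) :
    M N ≤ exp (3 / 2 * log 3 * (1 + (n + 1) ^ 2)) * M 0 ^ (1 - (N : ℝ) / (n + 3 / 2))
      * B ^ ((N : ℝ) / (n + 3 / 2)) := by
  set α : ℝ := N / (n + 3 / 2)
  set C := exp (3 / 2 * log 3 * (1 + (n + 1) ^ 2))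
  have hα : α ≤ 1 := by
    rw [div_le_one (by positivity)]
    have : (N : ℝ) ≤ n + 1 := by exact_mod_cast hN
    linarith
  -- The hypotheses survive adding `ε` to every `M j` and to `B`, which makes everything positive.
  have hε : ∀ ε > 0, M N ≤ C * (M 0 + ε) ^ (1 - α) * (B + ε) ^ α := fun ε hε => by
    have := le_mul_rpow_mul_rpow_of_pos (M := fun j => M j + ε) (B := B + ε)
      (fun j hj => by linarith [hM j hj]) (by linarith)
      (fun j hj δ hδ => by
        simpa using forall_add_le_two_mul_add_div_add_rpow_mul_add zero_le_one hε.le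
          (fun δ hδ => by rw [rpow_one]; exact hmid j hj δ hδ) δ hδ)
      (fun δ hδ => by
        rw [sqrt_eq_rpow]
        exact forall_add_le_two_mul_add_div_add_rpow_mul_add (by norm_num) hε.le
          (fun δ hδ => by rw [← sqrt_eq_rpow]; exact htop δ hδ) δ hδ) hN
    linarith
  have hcont : Continuous fun ε => C * (M 0 + ε) ^ (1 - α) * (B + ε) ^ α :=
    ((continuous_const.mul ((continuous_rpow_const (by linarith)).comp
      (continuous_const.add continuous_id))).mul
      ((continuous_rpow_const (by positivity)).comp (continuous_const.add continuous_id)))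
  have hlim : Tendsto (fun ε => C * (M 0 + ε) ^ (1 - α) * (B + ε) ^ α) (𝓝[>] 0)
      (𝓝 (C * M 0 ^ (1 - α) * B ^ α)) := by
    simpa using (hcont.tendsto 0).mono_left nhdsWithin_le_nhds
  exact ge_of_tendsto hlim (eventually_nhdsWithin_of_forall hε)

/-- Sobolev interpolation on the circle: for 0 ≤ N < K and f smooth
2π-periodic, ‖∂ₓᴺf‖_{L^∞} ≲_{N,K} ‖f‖_{L^∞}^{1-α}·‖∂ₓᴷf‖_{L²}^α with α = N/(K-1/2). -/
theorem stmt_7 (N K : ℕ) (hNK : N < K) :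
    ∃ c : ℝ, 0 < c ∧
      ∀ f : ℝ → ℝ, Function.Periodic f (2 * Real.pi) → ContDiff ℝ K f →
        sSup (Set.range fun x => |iteratedDeriv N f x|) ≤
          c * (sSup (Set.range fun x => |f x|)) ^ ((1:ℝ) - (N : ℝ) / ((K : ℝ) - 1/2))
            * (Real.sqrt (∫ x in (0:ℝ)..(2 * Real.pi), (iteratedDeriv K f x)^2))
              ^ ((N : ℝ) / ((K : ℝ) - 1/2)) := by
  rcases Nat.eq_zero_or_pos N with rfl | hN
  · exact ⟨1, one_pos, fun f _ _ => by simp⟩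
  obtain ⟨n, rfl⟩ : ∃ n, K = n + 2 := ⟨K - 2, by omega⟩
  refine ⟨exp (3 / 2 * log 3 * (1 + (n + 1) ^ 2)), exp_pos _, fun f hper hf => ?_⟩
  have hcont : ∀ j ≤ n + 2, Continuous (iteratedDeriv j f) := fun j hj =>
    hf.continuous_iteratedDeriv j (by exact_mod_cast hj)
  have hderiv : ∀ j < n + 2, ∀ x, HasDerivAt (iteratedDeriv j f) (iteratedDeriv (j + 1) f x) x :=
    fun j hj x => by
      rw [iteratedDeriv_succ]
      exact (hf.differentiable_iteratedDeriv j (by exact_mod_cast hj) x).hasDerivAt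
  have hsup : ∀ j ≤ n + 2, ∀ x, |iteratedDeriv j f x| ≤ ⨆ y, |iteratedDeriv j f y| :=
    fun j hj => le_ciSup ((hper.iteratedDeriv j).bddAbove_range_abs two_pi_pos.ne' (hcont j hj))
  have key := le_mul_rpow_mul_rpow (M := fun j => ⨆ x, |iteratedDeriv j f x|)
    (fun j _ => iSup_nonneg fun _ => abs_nonneg _) (sqrt_nonneg _)
    (fun j hj δ hδ => ciSup_le fun x => abs_deriv_le_of_abs_le (hderiv j (by omega))
      (hderiv (j + 1) (by omega)) (hcont (j + 2) (by omega)) (hsup j (by omega))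
      (hsup (j + 2) (by omega)) hδ x)
    (fun δ hδ => ciSup_le fun x => (hper.iteratedDeriv n).abs_deriv_le two_pi_pos
      (hderiv n (by omega)) (hderiv (n + 1) (by omega)) (hcont (n + 2) le_rfl)
      (hsup n (by omega)) hδ x)
    (show N ≤ n + 1 by omega)
  have hK : ((n + 2 : ℕ) : ℝ) - 1 / 2 = n + 3 / 2 := by push_cast; ring
  rw [hK]
  simp only [iteratedDeriv_zero] at key
  exact key
end

section
/- Energy hierarchy via Grönwall: suppose for 0 ≤ K ≤ N nonnegative C¹ functions E_K : [r_b, r₀] → ℝ (with r_b > 0, r₀ ≤ 1) satisfy r·(d/dr)(r^{2A}·E_K(r)) ≥ -C₁·r^{1-γ}·(r^{2A}·E_K(r)) - C₂·Σ_{k=0}^{K-1} r^{-2γ(K-k)}·(r^{2A}·E_k(r)) for K ≥ 1, and r·(d/dr)(r^{2A}·E₀(r)) ≥ -C₁·r^{1-γ}·(r^{2A}·E₀(r)) - A·r^{2A}, where A, C₁, C₂ > 0, 0 < γ < 1/100, and r₀^{2A}·Σ_k E_k(r₀) ≤ ζ. Then there exist constants D_K (depending on C₁, C₂, A, ζ,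 K, γ) such that r^{2A}·E_K(r) ≤ D_K·r^{-2γK} for all r ∈ [r_b, r₀]. -/
/-!
Each weighted energy `F_K = r^{2A} E_K` obeys a linear differential inequality
`r F_K' ≥ -C₁ r^{1-γ} F_K - c_K r^{p_K}`, which is integrated backwards from `r₀` with the
integrating factor `exp (C₁/(1-γ) · r^{1-γ})`; on `(0, 1]` this factor lies between `1` and
`exp (C₁/(1-γ))`, so no smallness of `r₀` is needed. For `K = 0` the source is `A r^{2A}` and
`F_0` stays bounded. For `K ≥ 1` the bounds `F_k ≤ D_k r^{-2γk}` already proved for `k < K`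
turn the coupling sum into a source `C₂ (∑_{k<K} D_k) r^{-2γK}`, whose primitive gives the loss
`r^{-2γK}` at the cost of the factor `1/(2γK)` in `D_K`.
-/

open Real Set

noncomputable def gronwallFactor (C γ s : ℝ) : ℝ := exp (C / (1 - γ) * s ^ (1 - γ))

lemma hasDerivAt_gronwallFactor {C γ s : ℝ} (hγ : γ < 1) (hs : 0 < s) :
    HasDerivAt (gronwallFactor C γ) (gronwallFactor C γ s * (C * s ^ (1 - γ) / s)) s := by
  have hpow :=
    (hasDerivAt_rpow_const (p := 1 - γ) (Or.inl hs.ne')).const_mul (C / (1 - γ))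
  refine hpow.exp.congr_deriv ?_
  rw [rpow_sub_one hs.ne', gronwallFactor]
  field_simp [(sub_pos.2 hγ).ne']

lemma one_le_gronwallFactor {C γ s : ℝ} (hC : 0 ≤ C) (hγ : γ < 1) (hs : 0 ≤ s) :
    1 ≤ gronwallFactor C γ s :=
  one_le_exp (mul_nonneg (div_nonneg hC (sub_pos.2 hγ).le) (rpow_nonneg hs _))

lemma gronwallFactor_le {C γ s : ℝ} (hC : 0 ≤ C) (hγ : γ < 1) (hs : 0 ≤ s) (hs1 : s ≤ 1) :
    gronwallFactor C γ s ≤ exp (C / (1 - γ)) := by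
  refine exp_le_exp.2 (mul_le_of_le_one_right (div_nonneg hC (sub_pos.2 hγ).le) ?_)
  exact rpow_le_one hs hs1 (sub_pos.2 hγ).le

lemma le_of_mul_deriv_ge {a b C γ c p : ℝ} {F F' : ℝ → ℝ} (ha : 0 < a) (hb : b ≤ 1)
    (hC : 0 ≤ C) (hγ : γ < 1) (hc : 0 ≤ c) (hp : p ≠ 0)
    (hF : ∀ r ∈ Icc a b, 0 ≤ F r) (hF' : ∀ r ∈ Icc a b, HasDerivAt F (F' r) r)
    (h : ∀ r ∈ Icc a b, -C * r ^ (1 - γ) * F r - c * r ^ p ≤ r * F' r) :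
    ∀ r ∈ Icc a b, F r ≤ exp (C / (1 - γ)) * (F b + c / p * (b ^ p - r ^ p)) := by
  set M := exp (C / (1 - γ))
  set φ := gronwallFactor C γ
  have hpos : ∀ r ∈ Icc a b, 0 < r := fun r hr => ha.trans_le hr.1
  have hφ1 : ∀ r ∈ Icc a b, 1 ≤ φ r := fun r hr => one_le_gronwallFactor hC hγ (hpos r hr).le
  have hφM : ∀ r ∈ Icc a b, φ r ≤ M := fun r hr =>
    gronwallFactor_le hC hγ (hpos r hr).le (hr.2.trans hb)
  let H : ℝ → ℝ := fun s => φ s * F s + M * c / p * s ^ p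
  let H' : ℝ → ℝ := fun r =>
    (φ r * (C * r ^ (1 - γ) * F r + r * F' r) + M * c * r ^ p) / r
  have hH : ∀ r ∈ Icc a b, HasDerivAt H (H' r) r := by
    intro r hr
    have hr0 := hpos r hr
    refine (((hasDerivAt_gronwallFactor hγ hr0).mul (hF' r hr)).add
      ((hasDerivAt_rpow_const (p := p) (Or.inl hr0.ne')).const_mul (M * c / p))).congr_deriv
      ?_
    rw [rpow_sub_one hr0.ne']
    simp only [H']
    field_simp
    ring
  -- `r H' ≥ (M - φ r) c r^p ≥ 0`: the factor `M` in the source part of `H` absorbs `φ ≤ M`.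
  have hH'_nonneg : ∀ r ∈ Icc a b, 0 ≤ H' r := by
    intro r hr
    refine div_nonneg ?_ (hpos r hr).le
    have hsrc : -(c * r ^ p) ≤ C * r ^ (1 - γ) * F r + r * F' r := by linarith [h r hr]
    have hcr : 0 ≤ c * r ^ p := mul_nonneg hc (rpow_nonneg (hpos r hr).le _)
    nlinarith [mul_le_mul_of_nonneg_left hsrc (zero_le_one.trans (hφ1 r hr)), hφM r hr]
  have hmono : MonotoneOn H (Icc a b) :=
    monotoneOn_of_hasDerivWithinAt_nonneg (convex_Icc a b)
      (fun r hr => (hH r hr).continuousAt.continuousWithinAt)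
      (fun r hr => (hH r (interior_subset hr)).hasDerivWithinAt)
      (fun r hr => hH'_nonneg r (interior_subset hr))
  intro r hr
  have hb' : b ∈ Icc a b := ⟨hr.1.trans hr.2, le_rfl⟩
  have hHrb : H r ≤ H b := hmono hr hb' hr.2
  calc F r ≤ φ r * F r := le_mul_of_one_le_left (hF r hr) (hφ1 r hr)
    _ ≤ φ b * F b + M * c / p * (b ^ p - r ^ p) := by simp only [H] at hHrb; linarith
    _ ≤ M * F b + M * c / p * (b ^ p - r ^ p) := by
        gcongr; exacts [hF b hb', hφM b hb']
    _ = M * (F b + c / p * (b ^ p - r ^ p)) := by ring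

lemma le_of_mul_deriv_ge_rpow_pos {a b C γ A : ℝ} {F F' : ℝ → ℝ} (ha : 0 < a) (hb : b ≤ 1)
    (hC : 0 ≤ C) (hγ : γ < 1) (hA : 0 < A)
    (hF : ∀ r ∈ Icc a b, 0 ≤ F r) (hF' : ∀ r ∈ Icc a b, HasDerivAt F (F' r) r)
    (h : ∀ r ∈ Icc a b, -C * r ^ (1 - γ) * F r - A * r ^ (2 * A) ≤ r * F' r) :
    ∀ r ∈ Icc a b, F r ≤ exp (C / (1 - γ)) * (F b + 1 / 2) := by
  intro r hr
  have hbound := le_of_mul_deriv_ge ha hb hC hγ hA.le (by positivity) hF hF' h r hr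
  have hbp : b ^ (2 * A) ≤ 1 :=
    rpow_le_one (ha.trans_le (hr.1.trans hr.2)).le hb (by positivity)
  have hrp : 0 ≤ r ^ (2 * A) := rpow_nonneg (ha.trans_le hr.1).le _
  have hcoef : A / (2 * A) = 1 / 2 := by field_simp
  rw [hcoef] at hbound
  refine hbound.trans (mul_le_mul_of_nonneg_left ?_ (exp_pos _).le)
  linarith

lemma le_of_mul_deriv_ge_rpow_neg {a b C γ c p : ℝ} {F F' : ℝ → ℝ} (ha : 0 < a) (hb : b ≤ 1)
    (hC : 0 ≤ C) (hγ : γ < 1) (hc : 0 ≤ c) (hp : p < 0)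
    (hF : ∀ r ∈ Icc a b, 0 ≤ F r) (hF' : ∀ r ∈ Icc a b, HasDerivAt F (F' r) r)
    (h : ∀ r ∈ Icc a b, -C * r ^ (1 - γ) * F r - c * r ^ p ≤ r * F' r) :
    ∀ r ∈ Icc a b, F r ≤ exp (C / (1 - γ)) * (F b + c / -p) * r ^ p := by
  intro r hr
  have hbound := le_of_mul_deriv_ge ha hb hC hγ hc hp.ne hF hF' h r hr
  have hr0 : 0 < r := ha.trans_le hr.1
  have hrp : 1 ≤ r ^ p := one_le_rpow_of_pos_of_le_one_of_nonpos hr0 (hr.2.trans hb) hp.le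
  have hbp : 0 < b ^ p := rpow_pos_of_pos (hr0.trans_le hr.2) _
  have hFb : 0 ≤ F b := hF b ⟨hr.1.trans hr.2, le_rfl⟩
  have hcb : c / p * b ^ p ≤ 0 :=
    mul_nonpos_of_nonpos_of_nonneg (div_nonpos_of_nonneg_of_nonpos hc hp.le) hbp.le
  have hsrc : c / p * (b ^ p - r ^ p) ≤ c / -p * r ^ p := by
    rw [div_neg, neg_mul]; linarith
  calc F r ≤ exp (C / (1 - γ)) * (F b + c / -p * r ^ p) := by
        refine hbound.trans (mul_le_mul_of_nonneg_left ?_ (exp_pos _).le); linarith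
    _ ≤ exp (C / (1 - γ)) * (F b * r ^ p + c / -p * r ^ p) := by
        gcongr; exact le_mul_of_one_le_right hFb hrp
    _ = exp (C / (1 - γ)) * (F b + c / -p) * r ^ p := by ring

-- Used with `M = exp (C₁ / (1 - γ))`; the `1 / 2` is `A / (2A)` from the source `A r^{2A}`.
noncomputable def energyConst (M C₂ ζ γ : ℝ) : ℕ → ℝ
  | 0 => M * (ζ + 1 / 2)
  | K + 1 =>
    M * (ζ + C₂ * (∑ k : Fin (K + 1), energyConst M C₂ ζ γ k) / (2 * γ * (K + 1)))

lemma energyConst_succ (M C₂ ζ γ : ℝ) (K : ℕ) :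
    energyConst M C₂ ζ γ (K + 1) =
      M * (ζ + C₂ * (∑ k ∈ Finset.range (K + 1), energyConst M C₂ ζ γ k) /
        (2 * γ * (K + 1))) := by
  rw [energyConst, Fin.sum_univ_eq_sum_range (energyConst M C₂ ζ γ)]

lemma energyConst_pos {M C₂ ζ γ : ℝ} (hM : 0 < M) (hC₂ : 0 ≤ C₂) (hζ : 0 < ζ) (hγ : 0 ≤ γ) :
    ∀ K, 0 < energyConst M C₂ ζ γ K := by
  intro K
  induction K using Nat.strong_induction_on with
  | _ K IH =>
    rcases K with _ | K
    · rw [energyConst]; positivity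
    · rw [energyConst_succ]
      have : 0 ≤ ∑ k ∈ Finset.range (K + 1), energyConst M C₂ ζ γ k :=
        Finset.sum_nonneg fun k hk => (IH k (Finset.mem_range.1 hk)).le
      positivity

lemma sum_rpow_mul_le {r t : ℝ} (hr : 0 < r) {n : ℕ} {f d : ℕ → ℝ}
    (h : ∀ k < n, f k ≤ d k * r ^ (t * k)) :
    ∑ k ∈ Finset.range n, r ^ (t * ((n : ℝ) - k)) * f k ≤
      (∑ k ∈ Finset.range n, d k) * r ^ (t * n) := by
  rw [Finset.sum_mul]
  refine Finset.sum_le_sum fun k hk => ?_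
  calc r ^ (t * ((n : ℝ) - k)) * f k ≤ r ^ (t * ((n : ℝ) - k)) * (d k * r ^ (t * k)) :=
        mul_le_mul_of_nonneg_left (h k (Finset.mem_range.1 hk)) (rpow_nonneg hr.le _)
    _ = d k * r ^ (t * n) := by
        rw [mul_left_comm, ← rpow_add hr]; ring_nf

lemma energy_hierarchy_bound {N : ℕ} {a b A C₁ C₂ ζ γ : ℝ} {F F' : ℕ → ℝ → ℝ}
    (ha : 0 < a) (hb : b ≤ 1) (hA : 0 < A) (hC₁ : 0 ≤ C₁) (hC₂ : 0 ≤ C₂) (hγ : 0 < γ)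
    (hγ1 : γ < 1) (hζ : 0 < ζ)
    (hF : ∀ K ≤ N, ∀ r ∈ Icc a b, 0 ≤ F K r)
    (hF' : ∀ K ≤ N, ∀ r ∈ Icc a b, HasDerivAt (F K) (F' K r) r)
    (h0 : ∀ r ∈ Icc a b, -C₁ * r ^ (1 - γ) * F 0 r - A * r ^ (2 * A) ≤ r * F' 0 r)
    (hK : ∀ K, 1 ≤ K → K ≤ N → ∀ r ∈ Icc a b,
      -C₁ * r ^ (1 - γ) * F K r -
        C₂ * ∑ k ∈ Finset.range K, r ^ (-2 * γ * ((K : ℝ) - k)) * F k r ≤ r * F' K r)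
    (hFb : ∀ K ≤ N, F K b ≤ ζ) :
    ∀ K ≤ N, ∀ r ∈ Icc a b,
      F K r ≤ energyConst (exp (C₁ / (1 - γ))) C₂ ζ γ K * r ^ (-2 * γ * (K : ℝ)) := by
  set D := energyConst (exp (C₁ / (1 - γ))) C₂ ζ γ
  intro K
  induction K using Nat.strong_induction_on with
  | _ K IH =>
  intro hKN r hr
  rcases K with _ | K
  · have h := le_of_mul_deriv_ge_rpow_pos ha hb hC₁ hγ1 hA (hF 0 hKN) (hF' 0 hKN) h0 r hr
    simp only [D, energyConst, Nat.cast_zero, mul_zero, rpow_zero, mul_one]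
    exact h.trans (by gcongr; exact hFb 0 hKN)
  · set p : ℝ := -2 * γ * ((K + 1 : ℕ) : ℝ)
    set S := ∑ k ∈ Finset.range (K + 1), D k
    have hp : p < 0 := by simp only [p]; push_cast; nlinarith
    have hsrc : ∀ s ∈ Icc a b,
        -C₁ * s ^ (1 - γ) * F (K + 1) s - C₂ * S * s ^ p ≤ s * F' (K + 1) s := by
      intro s hs
      have hsum := sum_rpow_mul_le (t := -2 * γ) (d := D) (ha.trans_le hs.1)
        fun k hk => IH k hk (hk.le.trans hKN) s hs
      have := hK (K + 1) K.succ_pos hKN s hs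
      nlinarith [mul_le_mul_of_nonneg_left hsum hC₂]
    have hS : 0 ≤ S := Finset.sum_nonneg fun k _ =>
      (energyConst_pos (exp_pos _) hC₂ hζ hγ.le k).le
    have h := le_of_mul_deriv_ge_rpow_neg ha hb hC₁ hγ1 (mul_nonneg hC₂ hS) hp (hF _ hKN)
      (hF' _ hKN) hsrc r hr
    have hp' : -p = 2 * γ * (K + 1) := by simp only [p]; push_cast; ring
    rw [hp'] at h
    rw [show D (K + 1) = _ from energyConst_succ _ _ _ _ K]
    refine h.trans (mul_le_mul_of_nonneg_right ?_ (rpow_nonneg (ha.trans_le hr.1).le _))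
    gcongr
    exact hFb _ hKN

/-- Energy hierarchy via Grönwall: under the stated differential
inequalities for the weighted energies r^{2A}·E_K and the initial bound
r₀^{2A}·Σ_k E_k(r₀) ≤ ζ, one has r^{2A}·E_K(r) ≤ D_K·r^{-2γK} on [r_b, r₀], where
D_K depends only on C₁, C₂, A, ζ, K and γ. -/
theorem stmt_10 (N : ℕ) (A C₁ C₂ ζ γ : ℝ)
    (hA : 0 < A) (hC₁ : 0 < C₁) (hC₂ : 0 < C₂) (hζ : 0 < ζ)
    (hγ : 0 < γ) (hγ' : γ < 1/100) :
    ∃ D : ℕ → ℝ, (∀ K, 0 < D K) ∧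
      ∀ (r_b r₀ : ℝ) (E E' : ℕ → ℝ → ℝ),
        0 < r_b → r_b < r₀ → r₀ ≤ 1 →
        (∀ K ≤ N, ∀ r ∈ Set.Icc r_b r₀, 0 ≤ E K r) →
        (∀ K ≤ N, ∀ r ∈ Set.Icc r_b r₀,
          HasDerivAt (fun s => s ^ (2*A) * E K s) (E' K r) r) →
        (∀ K ≤ N, ∀ r ∈ Set.Icc r_b r₀, ContinuousAt (E' K) r) →
        (∀ K, 1 ≤ K → K ≤ N → ∀ r ∈ Set.Icc r_b r₀,
          r * E' K r ≥ -C₁ * r ^ (1 - γ) * (r ^ (2*A) * E K r)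
            - C₂ * ∑ k ∈ Finset.range K,
                r ^ (-2*γ*((K : ℝ) - (k : ℝ))) * (r ^ (2*A) * E k r)) →
        (∀ r ∈ Set.Icc r_b r₀,
          r * E' 0 r ≥ -C₁ * r ^ (1 - γ) * (r ^ (2*A) * E 0 r) - A * r ^ (2*A)) →
        (r₀ ^ (2*A) * ∑ k ∈ Finset.range (N+1), E k r₀ ≤ ζ) →
        ∀ K ≤ N, ∀ r ∈ Set.Icc r_b r₀,
          r ^ (2*A) * E K r ≤ D K * r ^ (-2*γ*(K : ℝ)) := by
  refine ⟨energyConst (exp (C₁ / (1 - γ))) C₂ ζ γ,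
    energyConst_pos (exp_pos _) hC₂.le hζ hγ.le, ?_⟩
  intro r_b r₀ E E' hrb hrr hr1 hE hE' _ hK h0 hinit
  have hr₀ : r₀ ∈ Icc r_b r₀ := ⟨hrr.le, le_rfl⟩
  have hFb : ∀ K ≤ N, r₀ ^ (2 * A) * E K r₀ ≤ ζ := fun K hKN =>
    (mul_le_mul_of_nonneg_left
      (Finset.single_le_sum
        (fun k hk => hE k (Nat.lt_succ_iff.1 (Finset.mem_range.1 hk)) r₀ hr₀)
        (Finset.mem_range.2 (Nat.lt_succ_of_le hKN)))
      (rpow_nonneg (hrb.trans hrr).le _)).trans hinit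
  exact energy_hierarchy_bound (F := fun K s => s ^ (2 * A) * E K s) hrb hr1 hA hC₁.le hC₂.le
    hγ (by linarith) hζ
    (fun K hKN r hr => mul_nonneg (rpow_nonneg (hrb.trans_le hr.1).le _) (hE K hKN r hr))
    hE' h0 hK hFb
end

section
/- Grönwall with a logarithmically large kernel: let y : [r_b, r₀] → ℝ_{≥0} be continuous satisfying y(r) ≤ D₁·r₀^{-γ} + ∫_r^{r₀} h(s)·y(s)·ds/s where h ≥ 0 satisfies ∫_r^{r₀} h(s)·ds/s ≤ γ·log(r₀/r) + D₂ for all r ∈ [r_b, r₀]. Then y(r) ≤ D₁·e^{D₂}·r^{-γ} for all r ∈ [r_b, r₀]. -/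
/-!
Let `Φ(t) = A + ∫_t^b g y`, so that `y ≤ Φ` and `Φ` is nonincreasing. On a piece `[c, d]` of
kernel mass `m = ∫_c^d g < 1` this gives `(1 - m) Φ(c) ≤ Φ(d)`, hence `Φ(c) ≤ e^{k m} Φ(d)` as soon as
`(1 - m)⁻¹ ≤ k`. Since the mass of short pieces is uniformly small, `e^{-k ∫_t^b g} Φ(t)` is
nondecreasing on `[a, b]` for every `k > 1`, so `y(t) ≤ A e^{k ∫_t^b g}`; let `k → 1`.
With `g(s) = h(s)/s` the kernel hypothesis turns `e^{∫_r^{r₀} g}` into at most `e^{D₂} (r₀/r)^γ`.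
-/

open MeasureTheory Set intervalIntegral Filter Topology Real

theorem monotoneOn_Icc_of_forall_sub_le {α : Type*} [Preorder α] {f : ℝ → α} {a b δ : ℝ}
    (hδ : 0 < δ) (hf : ∀ x ∈ Icc a b, ∀ y ∈ Icc a b, x ≤ y → y - x ≤ δ → f x ≤ f y) :
    MonotoneOn f (Icc a b) := by
  have chain : ∀ n : ℕ, ∀ x ∈ Icc a b, ∀ y ∈ Icc a b, x ≤ y → y - x ≤ n * δ → f x ≤ f y := by
    intro n
    induction n with
    | zero =>
      intro x _ y _ hxy hyx
      obtain rfl : x = y := by push_cast at hyx; linarith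
      exact le_rfl
    | succ n ih =>
      intro x hx y hy hxy hyx
      have hxz : x ≤ min y (x + δ) := le_min hxy (by linarith)
      have hz : min y (x + δ) ∈ Icc a b := ⟨hx.1.trans hxz, (min_le_left _ _).trans hy.2⟩
      refine (hf x hx _ hz hxz (by linarith [min_le_right y (x + δ)])).trans
        (ih _ hz y hy (min_le_left _ _) ?_)
      rcases min_cases y (x + δ) with ⟨hmin, -⟩ | ⟨hmin, -⟩ <;> rw [hmin]
      · simp only [sub_self]; positivity
      · push_cast at hyx; linarith
  intro x hx y hy hxy
  obtain ⟨n, hn⟩ := exists_nat_ge ((y - x) / δ)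
  exact chain n x hx y hy hxy ((div_le_iff₀ hδ).mp hn)

theorem IntervalIntegrable.mono_Icc {f : ℝ → ℝ} {a b c d : ℝ}
    (hf : IntervalIntegrable f volume a b) (hc : c ∈ Icc a b) (hd : d ∈ Icc a b) :
    IntervalIntegrable f volume c d :=
  hf.mono_set (uIcc_subset_uIcc (Icc_subset_uIcc hc) (Icc_subset_uIcc hd))

theorem IntervalIntegrable.exists_pos_forall_abs_integral_lt {g : ℝ → ℝ} {a b ε : ℝ}
    (hg : IntervalIntegrable g volume a b) (hε : 0 < ε) :
    ∃ δ > 0, ∀ x ∈ Icc a b, ∀ y ∈ Icc a b, |y - x| < δ → |∫ s in x..y, g s| < ε := by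
  have hcont : ContinuousOn (fun x => ∫ s in a..x, g s) (uIcc a b) :=
    continuousOn_primitive_interval ((intervalIntegrable_iff').mp hg)
  obtain ⟨δ, hδ, hclose⟩ :=
    Metric.uniformContinuousOn_iff.mp (isCompact_uIcc.uniformContinuousOn_of_continuous hcont) ε hε
  refine ⟨δ, hδ, fun x hx y hy hxy => ?_⟩
  have ha : a ∈ Icc a b := ⟨le_rfl, hx.1.trans hx.2⟩
  have := hclose y (Icc_subset_uIcc hy) x (Icc_subset_uIcc hx) (by rwa [Real.dist_eq])
  rwa [Real.dist_eq, integral_interval_sub_left (hg.mono_Icc ha hy) (hg.mono_Icc ha hx)] at this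

theorem Real.inv_one_sub_le_exp_div {m : ℝ} (hm : m < 1) : (1 - m)⁻¹ ≤ exp (m / (1 - m)) := by
  have hpos : 0 < 1 - m := by linarith
  calc (1 - m)⁻¹ = m / (1 - m) + 1 := by field_simp; ring
    _ ≤ exp (m / (1 - m)) := add_one_le_exp _

theorem le_exp_mul_mul_of_one_sub_mul_le {k m u v : ℝ} (hm₀ : 0 ≤ m) (hm₁ : m < 1)
    (hk : (1 - m)⁻¹ ≤ k) (hv : 0 ≤ v) (h : (1 - m) * u ≤ v) : u ≤ exp (k * m) * v := by
  have hpos : 0 < 1 - m := by linarith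
  calc u ≤ (1 - m)⁻¹ * v := by rw [inv_mul_eq_div, le_div_iff₀ hpos, mul_comm]; exact h
    _ ≤ exp (m / (1 - m)) * v := by gcongr; exact inv_one_sub_le_exp_div hm₁
    _ ≤ exp (k * m) * v := by
      gcongr
      rw [div_eq_mul_inv, mul_comm]
      exact mul_le_mul_of_nonneg_right hk hm₀

section Gronwall

variable {a b A : ℝ} {g y : ℝ → ℝ}

theorem one_sub_integral_mul_le_of_le_add_integral
    (hg_nn : ∀ t ∈ Icc a b, 0 ≤ g t) (hy_nn : ∀ t ∈ Icc a b, 0 ≤ y t)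
    (hg : IntervalIntegrable g volume a b)
    (hgy : IntervalIntegrable (fun s => g s * y s) volume a b)
    (hy : ∀ t ∈ Icc a b, y t ≤ A + ∫ s in t..b, g s * y s)
    {c d : ℝ} (hc : c ∈ Icc a b) (hd : d ∈ Icc a b) (hcd : c ≤ d) :
    (1 - ∫ s in c..d, g s) * (A + ∫ s in c..b, g s * y s) ≤ A + ∫ s in d..b, g s * y s := by
  have hb : b ∈ Icc a b := ⟨hc.1.trans hc.2, le_rfl⟩
  have hsub : Icc c d ⊆ Icc a b := Icc_subset_Icc hc.1 hd.2
  have hy_le : ∀ t ∈ Icc c d, y t ≤ A + ∫ s in c..b, g s * y s := by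
    intro t ht
    have htab := hsub ht
    have hhead : 0 ≤ ∫ s in c..t, g s * y s :=
      integral_nonneg ht.1 fun s hs =>
        mul_nonneg (hg_nn s (hsub ⟨hs.1, hs.2.trans ht.2⟩)) (hy_nn s (hsub ⟨hs.1, hs.2.trans ht.2⟩))
    have hsplit := integral_add_adjacent_intervals (hgy.mono_Icc hc htab) (hgy.mono_Icc htab hb)
    linarith [hy t htab]
  have hpiece : ∫ s in c..d, g s * y s ≤ (∫ s in c..d, g s) * (A + ∫ s in c..b, g s * y s) := by
    rw [← intervalIntegral.integral_mul_const]
    exact integral_mono_on hcd (hgy.mono_Icc hc hd) ((hg.mono_Icc hc hd).mul_const _)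
      fun t ht => mul_le_mul_of_nonneg_left (hy_le t ht) (hg_nn t (hsub ht))
  have hsplit := integral_add_adjacent_intervals (hgy.mono_Icc hc hd) (hgy.mono_Icc hd hb)
  linarith

theorem le_mul_exp_mul_integral_of_le_add_integral
    (hg_nn : ∀ t ∈ Icc a b, 0 ≤ g t) (hy_nn : ∀ t ∈ Icc a b, 0 ≤ y t)
    (hg : IntervalIntegrable g volume a b)
    (hgy : IntervalIntegrable (fun s => g s * y s) volume a b)
    (hy : ∀ t ∈ Icc a b, y t ≤ A + ∫ s in t..b, g s * y s) {k : ℝ} (hk : 1 < k) :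
    ∀ t ∈ Icc a b, y t ≤ A * exp (k * ∫ s in t..b, g s) := by
  intro t ht
  have hb : b ∈ Icc a b := ⟨ht.1.trans ht.2, le_rfl⟩
  have hk₀ : 0 < k := zero_lt_one.trans hk
  obtain ⟨δ, hδ, hsmall⟩ := hg.exists_pos_forall_abs_integral_lt (ε := 1 - k⁻¹)
    (sub_pos.mpr (inv_lt_one_of_one_lt₀ hk))
  have hmono : MonotoneOn
      (fun t => exp (-(k * ∫ s in t..b, g s)) * (A + ∫ s in t..b, g s * y s)) (Icc a b) := by
    refine monotoneOn_Icc_of_forall_sub_le (half_pos hδ) fun c hc d hd hcd hdc => ?_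
    have hm₀ : 0 ≤ ∫ s in c..d, g s :=
      integral_nonneg hcd fun s hs => hg_nn s (Icc_subset_Icc hc.1 hd.2 hs)
    have hm : |∫ s in c..d, g s| < 1 - k⁻¹ :=
      hsmall c hc d hd (by rw [abs_of_nonneg (sub_nonneg.mpr hcd)]; linarith)
    rw [abs_of_nonneg hm₀] at hm
    have hΦd : 0 ≤ A + ∫ s in d..b, g s * y s := (hy_nn d hd).trans (hy d hd)
    have hk_inv : (1 - ∫ s in c..d, g s)⁻¹ ≤ k :=
      (inv_lt_of_inv_lt₀ hk₀ (by linarith)).le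
    have hstep := le_exp_mul_mul_of_one_sub_mul_le hm₀
      (by linarith [inv_pos.mpr hk₀]) hk_inv hΦd
      (one_sub_integral_mul_le_of_le_add_integral hg_nn hy_nn hg hgy hy hc hd hcd)
    have hmass := integral_add_adjacent_intervals (hg.mono_Icc hc hd) (hg.mono_Icc hd hb)
    calc exp (-(k * ∫ s in c..b, g s)) * (A + ∫ s in c..b, g s * y s)
        ≤ exp (-(k * ∫ s in c..b, g s)) *
            (exp (k * ∫ s in c..d, g s) * (A + ∫ s in d..b, g s * y s)) := by gcongr
      _ = exp (-(k * ∫ s in d..b, g s)) * (A + ∫ s in d..b, g s * y s) := by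
          rw [← mul_assoc, ← exp_add, ← hmass]; ring_nf
  have hψ := hmono ht hb ht.2
  simp only [integral_same, mul_zero, neg_zero, exp_zero, one_mul, add_zero] at hψ
  rw [exp_neg, inv_mul_le_iff₀ (exp_pos _)] at hψ
  linarith [hy t ht, mul_comm A (exp (k * ∫ s in t..b, g s))]

theorem le_mul_exp_integral_of_le_add_integral
    (hg_nn : ∀ t ∈ Icc a b, 0 ≤ g t) (hy_nn : ∀ t ∈ Icc a b, 0 ≤ y t)
    (hg : IntervalIntegrable g volume a b)
    (hgy : IntervalIntegrable (fun s => g s * y s) volume a b)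
    (hy : ∀ t ∈ Icc a b, y t ≤ A + ∫ s in t..b, g s * y s) :
    ∀ t ∈ Icc a b, y t ≤ A * exp (∫ s in t..b, g s) := by
  intro t ht
  have hlim : Tendsto (fun k => A * exp (k * ∫ s in t..b, g s)) (𝓝[>] 1)
      (𝓝 (A * exp (1 * ∫ s in t..b, g s))) :=
    ((by fun_prop : Continuous fun k => A * exp (k * ∫ s in t..b, g s)).tendsto 1).mono_left
      nhdsWithin_le_nhds
  simpa only [one_mul] using ge_of_tendsto hlim (eventually_nhdsWithin_of_forall fun k hk =>
    le_mul_exp_mul_integral_of_le_add_integral hg_nn hy_nn hg hgy hy hk t ht)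

end Gronwall

theorem stmt_13_general (r_b r₀ γ D₁ D₂ : ℝ) (hrb : 0 < r_b)
    (hD₁ : 0 ≤ D₁)
    (y h : ℝ → ℝ)
    (hy_nn : ∀ r ∈ Set.Icc r_b r₀, 0 ≤ y r)
    (hh_nn : ∀ r ∈ Set.Icc r_b r₀, 0 ≤ h r)
    (hint1 : IntervalIntegrable (fun s => h s / s) volume r_b r₀)
    (hint2 : IntervalIntegrable (fun s => h s * y s / s) volume r_b r₀)
    (hmain : ∀ r ∈ Set.Icc r_b r₀,
      y r ≤ D₁ * r₀ ^ (-γ) + ∫ s in r..r₀, h s * y s / s)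
    (hker : ∀ r ∈ Set.Icc r_b r₀,
      (∫ s in r..r₀, h s / s) ≤ γ * Real.log (r₀ / r) + D₂) :
    ∀ r ∈ Set.Icc r_b r₀, y r ≤ D₁ * Real.exp D₂ * r ^ (-γ) := by
  intro r hr
  have hr0 : 0 < r := hrb.trans_le hr.1
  have hr₀ : 0 < r₀ := hr0.trans_le hr.2
  have hA : 0 ≤ D₁ * r₀ ^ (-γ) := mul_nonneg hD₁ (rpow_nonneg hr₀.le _)
  have hgronwall := le_mul_exp_integral_of_le_add_integral
    (fun s hs => div_nonneg (hh_nn s hs) (hrb.le.trans hs.1)) hy_nn hint1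
    (by simpa only [div_mul_eq_mul_div] using hint2)
    (fun t ht => by simpa only [div_mul_eq_mul_div] using hmain t ht) r hr
  calc y r ≤ D₁ * r₀ ^ (-γ) * exp (∫ s in r..r₀, h s / s) := hgronwall
    _ ≤ D₁ * r₀ ^ (-γ) * exp (γ * log (r₀ / r) + D₂) := by gcongr; exact hker r hr
    _ = D₁ * exp D₂ * r ^ (-γ) := by
      rw [exp_add, mul_comm γ, ← rpow_def_of_pos (div_pos hr₀ hr0), div_rpow hr₀.le hr0.le,
        rpow_neg hr₀.le, rpow_neg hr0.le]
      field_simp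

/-- Grönwall with a logarithmically large kernel: if
y(r) ≤ D₁·r₀^{-γ} + ∫_r^{r₀} h(s)·y(s) ds/s with h ≥ 0 and
∫_r^{r₀} h(s) ds/s ≤ γ·log(r₀/r) + D₂, then y(r) ≤ D₁·e^{D₂}·r^{-γ}. -/
theorem stmt_13 (r_b r₀ γ D₁ D₂ : ℝ) (hrb : 0 < r_b) (hrr : r_b < r₀)
    (hγ : 0 < γ) (hD₁ : 0 ≤ D₁) (hD₂ : 0 ≤ D₂)
    (y h : ℝ → ℝ)
    (hy_cont : ContinuousOn y (Set.Icc r_b r₀))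
    (hy_nn : ∀ r ∈ Set.Icc r_b r₀, 0 ≤ y r)
    (hh_nn : ∀ r ∈ Set.Icc r_b r₀, 0 ≤ h r)
    (hint1 : IntervalIntegrable (fun s => h s / s) volume r_b r₀)
    (hint2 : IntervalIntegrable (fun s => h s * y s / s) volume r_b r₀)
    (hmain : ∀ r ∈ Set.Icc r_b r₀,
      y r ≤ D₁ * r₀ ^ (-γ) + ∫ s in r..r₀, h s * y s / s)
    (hker : ∀ r ∈ Set.Icc r_b r₀,
      (∫ s in r..r₀, h s / s) ≤ γ * Real.log (r₀ / r) + D₂) :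
    ∀ r ∈ Set.Icc r_b r₀, y r ≤ D₁ * Real.exp D₂ * r ^ (-γ) :=
  stmt_13_general r_b r₀ γ D₁ D₂ hrb hD₁ y h hy_nn hh_nn hint1 hint2 hmain hker
end

section
/- Constraint propagation: if C₁, C₂ : [r_b, r₀] × S¹ → ℝ are C¹ solutions of the linear hyperbolic system r·∂_r C₁ = r·a·∂ₓC₂ + f·C₁ and r·∂_r C₂ = r·a·∂ₓC₁ + g·C₂, where a, f, g are continuous bounded functions, and the energy E(r) = (1/2)∫_{S¹}(C₁² + C₂²)dx vanishes at r = r₀, then C₁ ≡ C₂ ≡ 0 on [r_b, r₀] × S¹. (This follows since |r·dE/dr| ≤ C·E(r) for some constant C, via integration by parts on the circle.) -/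
/-!
Let `E(r) = ∫_{S¹} (C₁² + C₂²)`. Differentiating under the integral and inserting the system,
the terms carrying `a` combine into `2 ∂ₓ(a C₁ C₂) - 2 (∂ₓa) C₁ C₂`; the exact derivative
integrates to zero over the circle, and the remaining terms are bounded by the sup norms of
`∂ₓa`, `f / r`, `g / r`. Hence `E' ≥ -K E`, so `E(r) e^{K r}` is nondecreasing on `[r_b, r₀]`;
it is nonnegative and vanishes at `r₀`, so `E ≡ 0`, and continuity gives `C₁ = C₂ = 0`.
-/

open Set Function MeasureTheory intervalIntegral Real

lemma eq_zero_of_neg_mul_le_deriv {E E' : ℝ → ℝ} {a b K : ℝ}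
    (hE : ContinuousOn E (Icc a b)) (hE' : ∀ r ∈ Ioo a b, HasDerivAt E (E' r) r)
    (hK : ∀ r ∈ Ioo a b, -(K * E r) ≤ E' r) (hnonneg : ∀ r ∈ Icc a b, 0 ≤ E r)
    (hb : E b = 0) : ∀ r ∈ Icc a b, E r = 0 := by
  have hmono : MonotoneOn (fun r => E r * exp (K * r)) (Icc a b) := by
    refine monotoneOn_of_hasDerivWithinAt_nonneg (convex_Icc a b) (hE.mul (by fun_prop))
      (f' := fun r => (E' r + K * E r) * exp (K * r)) (fun r hr => ?_) (fun r hr => ?_)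
    · rw [interior_Icc] at hr ⊢
      have := (hE' r hr).mul ((hasDerivAt_id r).const_mul K).exp
      exact (this.congr_deriv (by simp only [id]; ring)).hasDerivWithinAt
    · rw [interior_Icc] at hr
      exact mul_nonneg (by linarith [hK r hr]) (exp_pos _).le
  intro r hr
  have hle := hmono hr (right_mem_Icc.2 (hr.1.trans hr.2)) hr.2
  simp only [hb, zero_mul] at hle
  exact le_antisymm (nonpos_of_mul_nonpos_left hle (exp_pos _)) (hnonneg r hr)

lemma hasDerivAt_intervalIntegral_of_continuous_deriv {F F' : ℝ → ℝ → ℝ} {s : Set ℝ}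
    {r u v : ℝ} (hs : s ∈ nhds r) (hF : Continuous (uncurry F)) (hF' : Continuous (uncurry F'))
    (hderiv : ∀ t ∈ s, ∀ x, HasDerivAt (F · x) (F' t x) t) :
    HasDerivAt (fun r => ∫ x in u..v, F r x) (∫ x in u..v, F' r x) r := by
  obtain ⟨ε, hε, hball⟩ := Metric.nhds_basis_closedBall.mem_iff.1 hs
  obtain ⟨M, hM⟩ := ((isCompact_closedBall r ε).prod isCompact_uIcc).exists_bound_of_continuousOn
    hF'.continuousOn
  have hslice : ∀ r, Continuous (F r) := fun r => hF.comp (Continuous.prodMk_right r)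
  refine (hasDerivAt_integral_of_dominated_loc_of_deriv_le (bound := fun _ => M)
    (Metric.closedBall_mem_nhds r hε)
    (Filter.Eventually.of_forall fun s => (hslice s).aestronglyMeasurable)
    ((hslice r).intervalIntegrable _ _)
    (hF'.comp (Continuous.prodMk_right r)).aestronglyMeasurable
    (ae_of_all _ fun x hx s hs => hM (s, x) ⟨hs, uIoc_subset_uIcc hx⟩) intervalIntegrable_const
    (ae_of_all _ fun x _ s hs => hderiv s (hball hs) x)).2

theorem Function.Periodic.intervalIntegral_deriv_eq_zero {u u' : ℝ → ℝ} {T : ℝ}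
    (hu : Periodic u T) (hderiv : ∀ x, HasDerivAt u (u' x) x)
    (hint : IntervalIntegrable u' volume 0 T) : ∫ x in 0..T, u' x = 0 := by
  rw [integral_eq_sub_of_hasDerivAt (fun x _ => hderiv x) hint, hu.eq, sub_self]

lemma intervalIntegrable_of_hasDerivAt_of_abs_le {u u' : ℝ → ℝ} {M a b : ℝ}
    (hderiv : ∀ x, HasDerivAt u (u' x) x) (hbound : ∀ x, |u' x| ≤ M) :
    IntervalIntegrable u' volume a b := by
  have hu' : u' = deriv u := funext fun x => (hderiv x).deriv.symm
  exact intervalIntegrable_const.mono_fun' (hu' ▸ aestronglyMeasurable_deriv u _)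
    (ae_of_all _ hbound)

theorem Function.Periodic.eq_zero_of_intervalIntegral_eq_zero {φ : ℝ → ℝ} {T : ℝ} (hT : 0 < T)
    (hper : Periodic φ T) (hcont : Continuous φ) (hnonneg : ∀ x, 0 ≤ φ x)
    (hint : ∫ x in 0..T, φ x = 0) (x : ℝ) : φ x = 0 := by
  obtain ⟨y, hy, hxy⟩ := hper.exists_mem_Ico₀ hT x
  rw [hxy]
  by_contra hne
  have := integral_pos hT hcont.continuousOn (fun x _ => hnonneg x)
    ⟨y, Ico_subset_Icc_self hy, (hnonneg y).lt_of_ne' hne⟩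
  exact this.ne' hint

lemma flux_deriv_sub_le_energy_rate {c₁ c₂ p q α c₁' c₂' α' f g r ρ Mα Mf Mg : ℝ}
    (hρ : 0 < ρ) (hρr : ρ ≤ r) (hα' : |α'| ≤ Mα) (hf : |f| ≤ Mf) (hg : |g| ≤ Mg)
    (hp : r * p = r * α * c₂' + f * c₁) (hq : r * q = r * α * c₁' + g * c₂) :
    2 * (α' * c₁ * c₂ + α * (c₁' * c₂ + c₁ * c₂'))
        - (Mα + 2 * Mf / ρ + 2 * Mg / ρ) * (c₁ ^ 2 + c₂ ^ 2)
      ≤ 2 * (c₁ * p + c₂ * q) := by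
  have hr : 0 < r := hρ.trans_le hρr
  have hp' : p = α * c₂' + f / r * c₁ := by field_simp; linarith
  have hq' : q = α * c₁' + g / r * c₂ := by field_simp; linarith
  have hcross : 2 * α' * c₁ * c₂ ≤ Mα * (c₁ ^ 2 + c₂ ^ 2) := by
    have h2 : |2 * c₁ * c₂| ≤ c₁ ^ 2 + c₂ ^ 2 :=
      abs_le.2 ⟨by nlinarith [sq_nonneg (c₁ + c₂)], two_mul_le_add_sq c₁ c₂⟩
    calc 2 * α' * c₁ * c₂ = α' * (2 * c₁ * c₂) := by ring
      _ ≤ |α'| * |2 * c₁ * c₂| := by rw [← abs_mul]; exact le_abs_self _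
      _ ≤ Mα * (c₁ ^ 2 + c₂ ^ 2) := mul_le_mul hα' h2 (abs_nonneg _) ((abs_nonneg _).trans hα')
  have hdiv : ∀ {h M : ℝ}, |h| ≤ M → 0 ≤ M / ρ ∧ -(M / ρ) ≤ h / r := fun {h M} hM => by
    have hM0 : 0 ≤ M := (abs_nonneg h).trans hM
    refine ⟨by positivity, ?_⟩
    calc -(M / ρ) ≤ -(M / r) := neg_le_neg (div_le_div_of_nonneg_left hM0 hρ hρr)
      _ ≤ h / r := by rw [← neg_div]; exact div_le_div_of_nonneg_right (neg_le_of_abs_le hM) hr.le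
  obtain ⟨hMf, hf'⟩ := hdiv hf
  obtain ⟨hMg, hg'⟩ := hdiv hg
  rw [hp', hq']
  linear_combination hcross + 2 * mul_le_mul_of_nonneg_right hf' (sq_nonneg c₁)
    + 2 * mul_le_mul_of_nonneg_right hg' (sq_nonneg c₂)
    + 2 * mul_nonneg hMf (sq_nonneg c₂) + 2 * mul_nonneg hMg (sq_nonneg c₁)

lemma neg_mul_energy_le_integral_energy_rate {c₁ c₂ p q α c₁' c₂' α' f g : ℝ → ℝ}
    {T r ρ Mα Mf Mg : ℝ} (hT : 0 ≤ T) (hρ : 0 < ρ) (hρr : ρ ≤ r)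
    (hc₁ : ∀ x, HasDerivAt c₁ (c₁' x) x) (hc₂ : ∀ x, HasDerivAt c₂ (c₂' x) x)
    (hα : ∀ x, HasDerivAt α (α' x) x) (hc₁' : Continuous c₁') (hc₂' : Continuous c₂')
    (hp : Continuous p) (hq : Continuous q)
    (hper₁ : Periodic c₁ T) (hper₂ : Periodic c₂ T) (hperα : Periodic α T)
    (hα' : ∀ x, |α' x| ≤ Mα) (hf : ∀ x, |f x| ≤ Mf) (hg : ∀ x, |g x| ≤ Mg)
    (hsys₁ : ∀ x, r * p x = r * α x * c₂' x + f x * c₁ x)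
    (hsys₂ : ∀ x, r * q x = r * α x * c₁' x + g x * c₂ x) :
    -((Mα + 2 * Mf / ρ + 2 * Mg / ρ) * ∫ x in 0..T, c₁ x ^ 2 + c₂ x ^ 2)
      ≤ ∫ x in 0..T, 2 * (c₁ x * p x + c₂ x * q x) := by
  set K := Mα + 2 * Mf / ρ + 2 * Mg / ρ
  set flux' := fun x => α' x * c₁ x * c₂ x + α x * (c₁' x * c₂ x + c₁ x * c₂' x)
  have hc₁c : Continuous c₁ := continuous_iff_continuousAt.2 fun x => (hc₁ x).continuousAt
  have hc₂c : Continuous c₂ := continuous_iff_continuousAt.2 fun x => (hc₂ x).continuousAt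
  have hαc : Continuous α := continuous_iff_continuousAt.2 fun x => (hα x).continuousAt
  have hflux : ∀ x, HasDerivAt (α * c₁ * c₂) (flux' x) x := fun x =>
    (((hα x).mul (hc₁ x)).mul (hc₂ x)).congr_deriv (by simp only [flux', Pi.mul_apply]; ring)
  have hflux_int : IntervalIntegrable flux' volume 0 T := by
    refine ((intervalIntegrable_of_hasDerivAt_of_abs_le hα hα').mul_continuousOn
      (hc₁c.mul hc₂c).continuousOn).add
      ((hαc.mul ((hc₁'.mul hc₂c).add (hc₁c.mul hc₂'))).intervalIntegrable _ _) |>.congr ?_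
    exact fun x _ => by simp only [flux', Pi.mul_apply, Pi.add_apply]; ring
  have hflux_zero : ∫ x in 0..T, flux' x = 0 :=
    ((hperα.mul hper₁).mul hper₂).intervalIntegral_deriv_eq_zero hflux hflux_int
  have hdensity : Continuous fun x => c₁ x ^ 2 + c₂ x ^ 2 := (hc₁c.pow 2).add (hc₂c.pow 2)
  calc -(K * ∫ x in 0..T, c₁ x ^ 2 + c₂ x ^ 2)
      = ∫ x in 0..T, 2 * flux' x - K * (c₁ x ^ 2 + c₂ x ^ 2) := by
        rw [integral_sub (hflux_int.const_mul 2) ((hdensity.const_mul K).intervalIntegrable _ _),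
          intervalIntegral.integral_const_mul, intervalIntegral.integral_const_mul,
          hflux_zero]
        ring
    _ ≤ ∫ x in 0..T, 2 * (c₁ x * p x + c₂ x * q x) :=
        integral_mono_on hT ((hflux_int.const_mul 2).sub
          ((hdensity.const_mul K).intervalIntegrable _ _))
          ((continuous_const.mul ((hc₁c.mul hp).add (hc₂c.mul hq))).intervalIntegrable _ _)
          fun x _ => flux_deriv_sub_le_energy_rate hρ hρr (hα' x) (hf x) (hg x) (hsys₁ x) (hsys₂ x)

theorem stmt_14_general (r_b r₀ : ℝ) (hrb : 0 < r_b)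
    (C₁ C₂ a f g drC₁ dxC₁ drC₂ dxC₂ dxa : ℝ → ℝ → ℝ)
    (hC₁cont : Continuous (Function.uncurry C₁))
    (hC₂cont : Continuous (Function.uncurry C₂))
    (hdxC₁cont : Continuous (Function.uncurry dxC₁))
    (hdxC₂cont : Continuous (Function.uncurry dxC₂))
    (hdrC₁cont : Continuous (Function.uncurry drC₁))
    (hdrC₂cont : Continuous (Function.uncurry drC₂))
    (hper₁ : ∀ r, Function.Periodic (C₁ r) (2 * Real.pi))
    (hper₂ : ∀ r, Function.Periodic (C₂ r) (2 * Real.pi))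
    (hpera : ∀ r, Function.Periodic (a r) (2 * Real.pi))
    (hr₁ : ∀ r ∈ Set.Icc r_b r₀, ∀ x, HasDerivAt (fun s => C₁ s x) (drC₁ r x) r)
    (hx₁ : ∀ r ∈ Set.Icc r_b r₀, ∀ x, HasDerivAt (fun y => C₁ r y) (dxC₁ r x) x)
    (hr₂ : ∀ r ∈ Set.Icc r_b r₀, ∀ x, HasDerivAt (fun s => C₂ s x) (drC₂ r x) r)
    (hx₂ : ∀ r ∈ Set.Icc r_b r₀, ∀ x, HasDerivAt (fun y => C₂ r y) (dxC₂ r x) x)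
    (hxa : ∀ r ∈ Set.Icc r_b r₀, ∀ x, HasDerivAt (fun y => a r y) (dxa r x) x)
    (hdxa_bd : ∃ Ma', ∀ r ∈ Set.Icc r_b r₀, ∀ x, |dxa r x| ≤ Ma')
    (hf_bd : ∃ Mf, ∀ r ∈ Set.Icc r_b r₀, ∀ x, |f r x| ≤ Mf)
    (hg_bd : ∃ Mg, ∀ r ∈ Set.Icc r_b r₀, ∀ x, |g r x| ≤ Mg)
    (hsys₁ : ∀ r ∈ Set.Icc r_b r₀, ∀ x,
      r * drC₁ r x = r * a r x * dxC₂ r x + f r x * C₁ r x)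
    (hsys₂ : ∀ r ∈ Set.Icc r_b r₀, ∀ x,
      r * drC₂ r x = r * a r x * dxC₁ r x + g r x * C₂ r x)
    (hE0 : (1/2) * ∫ x in (0:ℝ)..(2 * Real.pi),
      ((C₁ r₀ x)^2 + (C₂ r₀ x)^2) = 0) :
    ∀ r ∈ Set.Icc r_b r₀, ∀ x, C₁ r x = 0 ∧ C₂ r x = 0 := by
  obtain ⟨Ma', hMa'⟩ := hdxa_bd
  obtain ⟨Mf, hMf⟩ := hf_bd
  obtain ⟨Mg, hMg⟩ := hg_bd
  set K := Ma' + 2 * Mf / r_b + 2 * Mg / r_b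
  set density : ℝ → ℝ → ℝ := fun r x => C₁ r x ^ 2 + C₂ r x ^ 2
  set E : ℝ → ℝ := fun r => ∫ x in 0..2 * π, density r x
  have hdensity : Continuous (uncurry density) := (hC₁cont.pow 2).add (hC₂cont.pow 2)
  have hslice : ∀ {F : ℝ → ℝ → ℝ}, Continuous (uncurry F) → ∀ r, Continuous (F r) :=
    fun hF r => hF.comp (Continuous.prodMk_right r)
  have hE_deriv : ∀ r ∈ Ioo r_b r₀,
      HasDerivAt E (∫ x in 0..2 * π, 2 * (C₁ r x * drC₁ r x + C₂ r x * drC₂ r x)) r :=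
    fun r hr => hasDerivAt_intervalIntegral_of_continuous_deriv
      (F' := fun r x => 2 * (C₁ r x * drC₁ r x + C₂ r x * drC₂ r x))
      (Ioo_mem_nhds hr.1 hr.2) hdensity
      (continuous_const.mul ((hC₁cont.mul hdrC₁cont).add (hC₂cont.mul hdrC₂cont)))
      fun s hs x => (((hr₁ s (Ioo_subset_Icc_self hs) x).pow 2).add
        ((hr₂ s (Ioo_subset_Icc_self hs) x).pow 2)).congr_deriv (by ring)
  have hE_rate : ∀ r ∈ Ioo r_b r₀, -(K * E r) ≤
      ∫ x in 0..2 * π, 2 * (C₁ r x * drC₁ r x + C₂ r x * drC₂ r x) := fun r hr =>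
    have hr' := Ioo_subset_Icc_self hr
    neg_mul_energy_le_integral_energy_rate two_pi_pos.le hrb hr.1.le (hx₁ r hr') (hx₂ r hr')
      (hxa r hr') (hslice hdxC₁cont r) (hslice hdxC₂cont r)
      (hslice hdrC₁cont r) (hslice hdrC₂cont r)
      (hper₁ r) (hper₂ r) (hpera r) (hMa' r hr') (hMf r hr') (hMg r hr') (hsys₁ r hr') (hsys₂ r hr')
  have hE_zero : ∀ r ∈ Icc r_b r₀, E r = 0 :=
    eq_zero_of_neg_mul_le_deriv
      (continuous_parametric_intervalIntegral_of_continuous' hdensity _ _).continuousOn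
      hE_deriv hE_rate (fun r _ => integral_nonneg two_pi_pos.le fun x _ => by positivity)
      (by linarith)
  intro r hr x
  have hper : Periodic (density r) (2 * π) := fun y => by
    simp only [density, hper₁ r y, hper₂ r y]
  have h := hper.eq_zero_of_intervalIntegral_eq_zero two_pi_pos (hslice hdensity r)
      (fun y => by positivity) (hE_zero r hr) x
  obtain ⟨h₁, h₂⟩ := (add_eq_zero_iff_of_nonneg (sq_nonneg _) (sq_nonneg _)).1 h
  exact ⟨pow_eq_zero_iff two_ne_zero |>.1 h₁, pow_eq_zero_iff two_ne_zero |>.1 h₂⟩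

/-- Constraint propagation: C¹ solutions (C₁, C₂) of the linear
hyperbolic system r·∂_r C₁ = r·a·∂ₓC₂ + f·C₁, r·∂_r C₂ = r·a·∂ₓC₁ + g·C₂ on
[r_b, r₀] × S¹ (with a, f, g continuous and bounded, a C¹ in x with bounded ∂ₓa)
whose energy E(r) = ½∫(C₁² + C₂²)dx vanishes at r = r₀ vanish identically. -/
theorem stmt_14 (r_b r₀ : ℝ) (hrb : 0 < r_b) (hrr : r_b < r₀)
    (C₁ C₂ a f g drC₁ dxC₁ drC₂ dxC₂ dxa : ℝ → ℝ → ℝ)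
    (hC₁cont : Continuous (Function.uncurry C₁))
    (hC₂cont : Continuous (Function.uncurry C₂))
    (hdxC₁cont : Continuous (Function.uncurry dxC₁))
    (hdxC₂cont : Continuous (Function.uncurry dxC₂))
    (hdrC₁cont : Continuous (Function.uncurry drC₁))
    (hdrC₂cont : Continuous (Function.uncurry drC₂))
    (hacont : Continuous (Function.uncurry a))
    (hfcont : Continuous (Function.uncurry f))
    (hgcont : Continuous (Function.uncurry g))
    (hper₁ : ∀ r, Function.Periodic (C₁ r) (2 * Real.pi))
    (hper₂ : ∀ r, Function.Periodic (C₂ r) (2 * Real.pi))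
    (hpera : ∀ r, Function.Periodic (a r) (2 * Real.pi))
    (hr₁ : ∀ r ∈ Set.Icc r_b r₀, ∀ x, HasDerivAt (fun s => C₁ s x) (drC₁ r x) r)
    (hx₁ : ∀ r ∈ Set.Icc r_b r₀, ∀ x, HasDerivAt (fun y => C₁ r y) (dxC₁ r x) x)
    (hr₂ : ∀ r ∈ Set.Icc r_b r₀, ∀ x, HasDerivAt (fun s => C₂ s x) (drC₂ r x) r)
    (hx₂ : ∀ r ∈ Set.Icc r_b r₀, ∀ x, HasDerivAt (fun y => C₂ r y) (dxC₂ r x) x)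
    (hxa : ∀ r ∈ Set.Icc r_b r₀, ∀ x, HasDerivAt (fun y => a r y) (dxa r x) x)
    (ha_bd : ∃ Ma, ∀ r ∈ Set.Icc r_b r₀, ∀ x, |a r x| ≤ Ma)
    (hdxa_bd : ∃ Ma', ∀ r ∈ Set.Icc r_b r₀, ∀ x, |dxa r x| ≤ Ma')
    (hf_bd : ∃ Mf, ∀ r ∈ Set.Icc r_b r₀, ∀ x, |f r x| ≤ Mf)
    (hg_bd : ∃ Mg, ∀ r ∈ Set.Icc r_b r₀, ∀ x, |g r x| ≤ Mg)
    (hsys₁ : ∀ r ∈ Set.Icc r_b r₀, ∀ x,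
      r * drC₁ r x = r * a r x * dxC₂ r x + f r x * C₁ r x)
    (hsys₂ : ∀ r ∈ Set.Icc r_b r₀, ∀ x,
      r * drC₂ r x = r * a r x * dxC₁ r x + g r x * C₂ r x)
    (hE0 : (1/2) * ∫ x in (0:ℝ)..(2 * Real.pi),
      ((C₁ r₀ x)^2 + (C₂ r₀ x)^2) = 0) :
    ∀ r ∈ Set.Icc r_b r₀, ∀ x, C₁ r x = 0 ∧ C₂ r x = 0 :=
  stmt_14_general r_b r₀ hrb C₁ C₂ a f g drC₁ dxC₁ drC₂ dxC₂ dxa hC₁cont hC₂cont hdxC₁cont hdxC₂cont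
    hdrC₁cont hdrC₂cont hper₁ hper₂ hpera hr₁ hx₁ hr₂ hx₂ hxa hdxa_bd hf_bd hg_bd hsys₁ hsys₂ hE0
end

section
/- Sequential-to-full convergence upgrade: let Q : (0, r₀] → ℝ_{≥0} be C¹ with ∫₀^{r₀} Q(s)/s ds < ∞ and |r·Q'(r)| ≤ C·Q(r) for a constant C. Then Q(r) → 0 as r → 0. -/
open MeasureTheory Set Filter Topology

/-!
The bound `r Q' ≥ -C Q` says that `r ↦ Q r * r ^ C` is nondecreasing, so `Q r ≤ 2 ^ C Q s`
whenever `r ≤ s ≤ 2r`. Hence `Q r` is controlled by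
`2 ^ (C + 1) ∫_r^{2r} Q s / s ds`, and these integrals over shrinking intervals tend to `0`
because `Q s / s` is integrable near `0`.
-/

theorem monotoneOn_mul_rpow_of_neg_mul_le {f f' : ℝ → ℝ} {C : ℝ} {D : Set ℝ}
    (hD : Convex ℝ D) (hDpos : D ⊆ Ioi 0)
    (hf : ∀ t ∈ D, HasDerivAt f (f' t) t) (hbd : ∀ t ∈ D, -(C * f t) ≤ t * f' t) :
    MonotoneOn (fun t => f t * t ^ C) D := by
  have hderiv : ∀ t ∈ D,
      HasDerivAt (fun t => f t * t ^ C) (f' t * t ^ C + f t * (C * t ^ (C - 1))) t :=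
    fun t ht => (hf t ht).mul (Real.hasDerivAt_rpow_const (Or.inl (hDpos ht).ne'))
  refine monotoneOn_of_hasDerivWithinAt_nonneg hD
    (fun t ht => (hderiv t ht).continuousAt.continuousWithinAt)
    (fun t ht => (hderiv t (interior_subset ht)).hasDerivWithinAt) fun t ht => ?_
  have ht : t ∈ D := interior_subset ht
  have htpos : 0 < t := hDpos ht
  calc (0 : ℝ) ≤ t ^ (C - 1) * (t * f' t + C * f t) :=
        mul_nonneg (Real.rpow_nonneg htpos.le _) (by linarith [hbd t ht])
    _ = f' t * t ^ C + f t * (C * t ^ (C - 1)) := by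
        rw [Real.rpow_sub_one htpos.ne']; field_simp

theorem le_two_rpow_mul_of_monotoneOn_mul_rpow {f : ℝ → ℝ} {C a r s : ℝ} (hC : 0 ≤ C)
    (hmono : MonotoneOn (fun t => f t * t ^ C) (Ioc 0 a)) (hr : 0 < r) (hrs : r ≤ s)
    (hs : s ≤ 2 * r) (hsa : s ≤ a) (hfs : 0 ≤ f s) :
    f r ≤ 2 ^ C * f s := by
  have hrC : 0 < r ^ C := Real.rpow_pos_of_pos hr C
  have hmul : f r * r ^ C ≤ f s * s ^ C :=
    hmono ⟨hr, hrs.trans hsa⟩ ⟨hr.trans_le hrs, hsa⟩ hrs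
  have hsC : s ^ C ≤ 2 ^ C * r ^ C := by
    rw [← Real.mul_rpow zero_le_two hr.le]
    exact Real.rpow_le_rpow (hr.le.trans hrs) hs hC
  refine le_of_mul_le_mul_right ?_ hrC
  calc f r * r ^ C ≤ f s * s ^ C := hmul
    _ ≤ f s * (2 ^ C * r ^ C) := mul_le_mul_of_nonneg_left hsC hfs
    _ = 2 ^ C * f s * r ^ C := by ring

theorem le_two_mul_two_rpow_mul_setIntegral_Ioc {f : ℝ → ℝ} {C a r : ℝ} (hC : 0 ≤ C)
    (hmono : MonotoneOn (fun t => f t * t ^ C) (Ioc 0 a)) (hnn : ∀ t ∈ Ioc 0 a, 0 ≤ f t)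
    (hint : IntegrableOn (fun s => f s / s) (Ioc 0 a)) (hr : 0 < r) (h2r : 2 * r ≤ a) :
    f r ≤ 2 * 2 ^ C * ∫ s in Ioc r (2 * r), f s / s := by
  have hsub : Ioc r (2 * r) ⊆ Ioc 0 a := Ioc_subset_Ioc hr.le h2r
  have h2C : 0 < (2 : ℝ) ^ C := Real.rpow_pos_of_pos two_pos C
  have hlow : ∀ s ∈ Ioc r (2 * r), f r / (2 ^ C * (2 * r)) ≤ f s / s := by
    rintro s ⟨hrs, hs⟩
    have hspos : 0 < s := hr.trans hrs
    have hfs : 0 ≤ f s := hnn s (hsub ⟨hrs, hs⟩)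
    calc f r / (2 ^ C * (2 * r))
        ≤ 2 ^ C * f s / (2 ^ C * (2 * r)) := by
          gcongr
          exact le_two_rpow_mul_of_monotoneOn_mul_rpow hC hmono hr hrs.le hs (hs.trans h2r) hfs
      _ = f s / (2 * r) := mul_div_mul_left _ _ h2C.ne'
      _ ≤ f s / s := div_le_div_of_nonneg_left hfs hspos hs
  have hbound := setIntegral_ge_of_const_le measurableSet_Ioc measure_Ioc_lt_top.ne hlow
    (hint.mono_set hsub)
  have hvol : volume.real (Ioc r (2 * r)) = r := by
    rw [Real.volume_real_Ioc_of_le (by linarith)]; ring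
  rw [hvol, smul_eq_mul] at hbound
  calc f r = 2 * 2 ^ C * (r * (f r / (2 ^ C * (2 * r)))) := by field_simp
    _ ≤ 2 * 2 ^ C * ∫ s in Ioc r (2 * r), f s / s := by gcongr

theorem tendsto_setIntegral_Ioc_two_mul_nhdsGT_zero {f : ℝ → ℝ} {a : ℝ} (ha : 0 < a)
    (hint : IntegrableOn f (Ioc 0 a)) :
    Tendsto (fun r => ∫ s in Ioc r (2 * r), f s) (𝓝[>] 0) (𝓝 0) := by
  set μ := volume.restrict (Ioc 0 a)
  have hvol : Tendsto (fun r : ℝ => μ (Ioc r (2 * r))) (𝓝[>] 0) (𝓝 0) := by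
    have hlen : Tendsto (fun r : ℝ => ENNReal.ofReal (2 * r - r)) (𝓝[>] 0) (𝓝 0) := by
      rw [← ENNReal.ofReal_zero]
      exact ENNReal.tendsto_ofReal (Continuous.tendsto' (by fun_prop) 0 0 (by ring)
        |>.mono_left nhdsWithin_le_nhds)
    refine tendsto_of_tendsto_of_tendsto_of_le_of_le tendsto_const_nhds hlen
      (fun _ => zero_le) fun r => ?_
    rw [← Real.volume_Ioc]
    exact Measure.restrict_apply_le _ _
  refine (Integrable.tendsto_setIntegral_nhds_zero (μ := μ) hint hvol).congr' ?_
  filter_upwards [Ioo_mem_nhdsGT (half_pos ha)] with r ⟨hr, hra⟩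
  rw [Measure.restrict_restrict measurableSet_Ioc,
    inter_eq_left.mpr (Ioc_subset_Ioc hr.le (by linarith))]

theorem stmt_19_general (r₀ C : ℝ) (hr₀ : 0 < r₀) (hC : 0 < C)
    (Q Q' : ℝ → ℝ)
    (hQnn : ∀ r ∈ Set.Ioc (0:ℝ) r₀, 0 ≤ Q r)
    (hderiv : ∀ r ∈ Set.Ioc (0:ℝ) r₀, HasDerivAt Q (Q' r) r)
    (hint : MeasureTheory.IntegrableOn (fun s => Q s / s) (Set.Ioc 0 r₀))
    (hbd : ∀ r ∈ Set.Ioc (0:ℝ) r₀, |r * Q' r| ≤ C * Q r) :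
    Filter.Tendsto Q (nhdsWithin 0 (Set.Ioc 0 r₀)) (nhds 0) := by
  have hmono : MonotoneOn (fun t => Q t * t ^ C) (Ioc 0 r₀) :=
    monotoneOn_mul_rpow_of_neg_mul_le (convex_Ioc 0 r₀) Ioc_subset_Ioi_self hderiv
      fun t ht => neg_le_of_abs_le (hbd t ht)
  have hle : ∀ᶠ r in 𝓝[Ioc 0 r₀] 0, Q r ≤ 2 * 2 ^ C * ∫ s in Ioc r (2 * r), Q s / s := by
    filter_upwards [nhdsWithin_mono _ Ioc_subset_Ioi_self (Ioo_mem_nhdsGT (half_pos hr₀))]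
      with r ⟨hr, hr₀2⟩
    exact le_two_mul_two_rpow_mul_setIntegral_Ioc hC.le hmono hQnn hint hr (by linarith)
  have hlim : Tendsto (fun r => 2 * 2 ^ C * ∫ s in Ioc r (2 * r), Q s / s)
      (𝓝[Ioc 0 r₀] 0) (𝓝 0) := by
    simpa using ((tendsto_setIntegral_Ioc_two_mul_nhdsGT_zero hr₀ hint).const_mul
      (2 * 2 ^ C)).mono_left (nhdsWithin_mono 0 Ioc_subset_Ioi_self)
  exact squeeze_zero' (eventually_nhdsWithin_of_forall hQnn) hle hlim

/-- Sequential-to-full convergence upgrade: if Q ≥ 0 is C¹ on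
(0, r₀] with ∫₀^{r₀} Q(s)/s ds < ∞ and |r·Q'(r)| ≤ C·Q(r), then Q(r) → 0 as
r → 0. -/
theorem stmt_19 (r₀ C : ℝ) (hr₀ : 0 < r₀) (hC : 0 < C)
    (Q Q' : ℝ → ℝ)
    (hQnn : ∀ r ∈ Set.Ioc (0:ℝ) r₀, 0 ≤ Q r)
    (hderiv : ∀ r ∈ Set.Ioc (0:ℝ) r₀, HasDerivAt Q (Q' r) r)
    (hQ'cont : ContinuousOn Q' (Set.Ioc (0:ℝ) r₀))
    (hint : MeasureTheory.IntegrableOn (fun s => Q s / s) (Set.Ioc 0 r₀))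
    (hbd : ∀ r ∈ Set.Ioc (0:ℝ) r₀, |r * Q' r| ≤ C * Q r) :
    Filter.Tendsto Q (nhdsWithin 0 (Set.Ioc 0 r₀)) (nhds 0) :=
  stmt_19_general r₀ C hr₀ hC Q Q' hQnn hderiv hint hbd
end
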